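/- arXiv:1804.10524 — 11 statements merged into one kernel-verified Lean document; each statement's English description precedes it below -/
import Mathlib

section
/- Let X be a real vector space. For every u ∈ X, the point (u, u ⊗ u) is an extreme point of the convex hull of the diagonal {(v, v ⊗ v) : v ∈ X} inside the real vector space X × (X ⊗[ℝ] X). -/
/-!
For a linear functional `f` on `X`, the affine functional
`(x, T) ↦ (f ⊗ f) T - 2 f(u) f(x) + f(u)²` takes the value `(f v - f u)²` at the diagonal point
`(v, v ⊗ v)`. It is therefore nonnegative on the convex hull of the diagonal and vanishes at
`(u, u ⊗ u)`, so both ends of an open segment of the hull through `(u, u ⊗ u)` lie in its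
zero set. If a convex combination of diagonal points lies in all these zero sets, every point
`v` carrying positive weight satisfies `f v = f u` for all `f`, i.e. `v = u`.
-/

open scoped TensorProduct

theorem AffineMap.eq_zero_of_nonneg_of_mem_openSegment {𝕜 E : Type*} [CommRing 𝕜] [LinearOrder 𝕜]
    [IsStrictOrderedRing 𝕜] [AddCommGroup E] [Module 𝕜 E] (φ : E →ᵃ[𝕜] 𝕜) {x y z : E}
    (hy : 0 ≤ φ y) (hz : 0 ≤ φ z) (hx : x ∈ openSegment 𝕜 y z) (hφx : φ x = 0) : φ y = 0 := by
  obtain ⟨a, b, ha, hb, hab, rfl⟩ := hx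
  rw [Convex.combo_affine_apply hab, smul_eq_mul, smul_eq_mul] at hφx
  nlinarith

theorem AffineMap.map_sum_smul_of_sum_eq_one {ι k V W : Type*} [Ring k] [AddCommGroup V]
    [Module k V] [AddCommGroup W] [Module k W] (f : V →ᵃ[k] W) (s : Finset ι) (w : ι → k)
    (p : ι → V) (hw : ∑ i ∈ s, w i = 1) : f (∑ i ∈ s, w i • p i) = ∑ i ∈ s, w i • f (p i) := by
  rw [← s.affineCombination_eq_linear_combination p w hw, s.map_affineCombination p w hw,
    s.affineCombination_eq_linear_combination _ w hw, Function.comp_def]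

def tensorDiagonal (X : Type*) [AddCommGroup X] [Module ℝ X] : Set (X × (X ⊗[ℝ] X)) :=
  {p | ∃ v : X, p = (v, v ⊗ₜ[ℝ] v)}

section

variable {X : Type*} [AddCommGroup X] [Module ℝ X]

noncomputable def sqDeviation (u : X) (f : Module.Dual ℝ X) : X × (X ⊗[ℝ] X) →ᵃ[ℝ] ℝ :=
  (TensorProduct.dualDistrib ℝ X X (f ⊗ₜ f) ∘ₗ LinearMap.snd ℝ X (X ⊗[ℝ] X)
      - (2 * f u) • (f ∘ₗ LinearMap.fst ℝ X (X ⊗[ℝ] X))).toAffineMap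
    + AffineMap.const ℝ _ (f u ^ 2)

theorem sqDeviation_apply_tmul_self (u : X) (f : Module.Dual ℝ X) (v : X) :
    sqDeviation u f (v, v ⊗ₜ v) = (f v - f u) ^ 2 := by
  simp only [sqDeviation, AffineMap.coe_add, LinearMap.coe_toAffineMap, AffineMap.coe_const,
    Pi.add_apply, LinearMap.sub_apply, LinearMap.comp_apply, LinearMap.snd_apply,
    TensorProduct.dualDistrib_apply, LinearMap.smul_apply, LinearMap.fst_apply, smul_eq_mul,
    Function.const_apply]
  ring

theorem sqDeviation_nonneg_of_mem_convexHull (u : X) (f : Module.Dual ℝ X)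
    {y : X × (X ⊗[ℝ] X)} (hy : y ∈ convexHull ℝ (tensorDiagonal X)) :
    0 ≤ sqDeviation u f y := by
  refine convexHull_min ?_ ((convex_Ici 0).affine_preimage (sqDeviation u f)) hy
  rintro _ ⟨v, rfl⟩
  simpa only [Set.mem_preimage, Set.mem_Ici, sqDeviation_apply_tmul_self] using sq_nonneg _

theorem eq_of_mem_convexHull_of_forall_sqDeviation_eq_zero {u : X} {y : X × (X ⊗[ℝ] X)}
    (hy : y ∈ convexHull ℝ (tensorDiagonal X)) (h : ∀ f, sqDeviation u f y = 0) :
    y = (u, u ⊗ₜ u) := by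
  obtain ⟨ι, _, w, z, hw₀, hw₁, hz, rfl⟩ := mem_convexHull_iff_exists_fintype.mp hy
  choose v hv using hz
  have hvu : ∀ i, w i ≠ 0 → v i = u := by
    intro i hi
    rw [← sub_eq_zero, ← Module.forall_dual_apply_eq_zero_iff ℝ]
    intro f
    have hsum : ∑ j, w j * (f (v j) - f u) ^ 2 = 0 := by
      simpa only [AffineMap.map_sum_smul_of_sum_eq_one _ _ _ _ hw₁, hv,
        sqDeviation_apply_tmul_self, smul_eq_mul] using h f
    have hterm : w i * (f (v i) - f u) ^ 2 = 0 :=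
      (Finset.sum_eq_zero_iff_of_nonneg fun j _ => mul_nonneg (hw₀ j) (sq_nonneg _)).mp
        hsum i (Finset.mem_univ i)
    simpa [hi, sub_eq_zero] using hterm
  calc ∑ i, w i • z i = ∑ i, w i • (u, u ⊗ₜ[ℝ] u) := by
        refine Finset.sum_congr rfl fun i _ => ?_
        rcases eq_or_ne (w i) 0 with hi | hi
        · simp [hi]
        · rw [hv i, hvu i hi]
    _ = (u, u ⊗ₜ u) := by rw [← Finset.sum_smul, hw₁, one_smul]

end

/-- **Extreme points of the convex hull of the diagonal.**
For a real vector space `X`, each point `(u, u ⊗ u)` is an extreme point of the convex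
hull of the diagonal `{(v, v ⊗ v) : v ∈ X}` inside `X × (X ⊗[ℝ] X)`. -/
theorem diagonal_mem_extremePoints_convexHull
    {X : Type*} [AddCommGroup X] [Module ℝ X] (u : X) :
    (u, u ⊗ₜ[ℝ] u) ∈ Set.extremePoints ℝ
      (convexHull ℝ {p : X × (X ⊗[ℝ] X) | ∃ v : X, p = (v, v ⊗ₜ[ℝ] v)}) := by
  refine ⟨subset_convexHull ℝ _ ⟨u, rfl⟩, fun y hy z hz hu => ?_⟩
  refine eq_of_mem_convexHull_of_forall_sqDeviation_eq_zero hy fun f => ?_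
  exact (sqDeviation u f).eq_zero_of_nonneg_of_mem_openSegment
    (sqDeviation_nonneg_of_mem_convexHull u f hy) (sqDeviation_nonneg_of_mem_convexHull u f hz) hu
    (by rw [sqDeviation_apply_tmul_self, sub_self, sq, zero_mul])
end

section
/- Let X be a real Banach space and F : X → ℝ ∪ {+∞} be diconvex, i.e. there exists a proper convex function F̌ : X × (X ⊗[ℝ] X) → ℝ ∪ {+∞} with F̌(v, v ⊗ v) = F(v) for all v ∈ X. Define the convexification conv F_⊗ : X × (X ⊗[ℝ] X) → ℝ ∪ {+∞} by conv F_⊗(v, w) := inf { Σₙ₌₁^N αₙ F(uₙ) : N ∈ ℕ, uₙ ∈ X, αₙ ∈ [0,1], Σₙ αₙ = 1, (v, w) = Σₙ αₙ (uₙ, uₙ ⊗ uₙ) }, with the infimum over the empty set equal to +∞. Let u ∈ X with F(u) finite, let ξ be a continuous linear functional on X, and let Ξ be a continuous symmetric bilinear form on X with induced linear functional Ξ̃ on X ⊗[ℝ] X (so Ξ̃(a ⊗ b) = Ξ(a, b)). Then (ξ, Ξ) is a dilinear subgradient of F at u if and only if conv F_⊗(v, w) ≥ F(u) + ξ(v −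 u) + Ξ̃(w − u ⊗ u) for all v ∈ X and w ∈ X ⊗[ℝ] X. -/
open scoped TensorProduct BigOperators

/-- The convexification `conv F_⊗` of the lifting `F_⊗` of `F` to `X × (X ⊗[ℝ] X)`:
the infimum of `∑ αₙ F uₙ` over all convex combinations `(v, w) = ∑ αₙ (uₙ, uₙ ⊗ uₙ)`,
with `sInf ∅ = +∞` in `EReal`. -/
noncomputable def convFotimes {X : Type*} [AddCommGroup X] [Module ℝ X]
    (F : X → EReal) (p : X × (X ⊗[ℝ] X)) : EReal :=
  sInf {r : EReal | ∃ (N : ℕ) (uu : Fin N → X) (α : Fin N → ℝ),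
    (∀ i, 0 ≤ α i ∧ α i ≤ 1) ∧ (∑ i, α i = 1) ∧
    p = (∑ i, α i • (uu i, uu i ⊗ₜ[ℝ] uu i)) ∧
    r = ∑ i, (α i : EReal) * F (uu i)}

/-- Coercion of a real finset sum to `EReal`. -/
lemma ereal_coe_sum {ι : Type*} (s : Finset ι) (f : ι → ℝ) :
    ((∑ i ∈ s, f i : ℝ) : EReal) = ∑ i ∈ s, ((f i : ℝ) : EReal) :=
  map_sum (⟨⟨Real.toEReal, EReal.coe_zero⟩, EReal.coe_add⟩ : ℝ →+ EReal) f s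

/-- Multiplying an inequality between a real and an `EReal` by a nonnegative real. -/
lemma ereal_mul_le {a x : ℝ} {y : EReal} (ha : 0 ≤ a) (h : (x : EReal) ≤ y) :
    ((a * x : ℝ) : EReal) ≤ (a : EReal) * y := by
  rcases eq_or_lt_of_le ha with rfl | ha'
  · simp [EReal.zero_mul]
  · induction y with
    | bot => exact absurd h (by simp)
    | coe z =>
      rw [EReal.coe_mul]
      exact mul_le_mul_of_nonneg_left (by exact_mod_cast h) (by exact_mod_cast ha)
    | top => rw [EReal.coe_mul_top_of_pos ha']; exact le_top

/-- **Dilinear subgradients are exactly the subgradients of the convexification.**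
Let `X` be a real Banach space and `F : X → ℝ ∪ {+∞}` be diconvex, `u` a point where
`F` is finite, `ξ` a continuous linear functional, `Ξ` a continuous symmetric bilinear
form with induced linear functional `Ξt` on `X ⊗[ℝ] X`.  Then `(ξ, Ξ)` is a dilinear
subgradient of `F` at `u` if and only if the affine minorant condition holds for the
convexification `conv F_⊗` at `(u, u ⊗ u)`. -/
theorem dilinear_subgradient_iff_convexification_subgradient
    {X : Type*} [NormedAddCommGroup X] [NormedSpace ℝ X] [CompleteSpace X]
    (F : X → EReal) (hFbot : ∀ u : X, F u ≠ ⊥)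
    (hdiconvex : ∃ Fc : X × (X ⊗[ℝ] X) → EReal,
      (∀ p, Fc p ≠ ⊥) ∧ (∃ p, Fc p ≠ ⊤) ∧
      (∀ p q : X × (X ⊗[ℝ] X), ∀ θ : ℝ, 0 ≤ θ → θ ≤ 1 →
        Fc (θ • p + (1 - θ) • q) ≤ (θ : EReal) * Fc p + ((1 - θ : ℝ) : EReal) * Fc q) ∧
      (∀ v : X, Fc (v, v ⊗ₜ[ℝ] v) = F v))
    (u : X) (hFu : F u ≠ ⊤)
    (ξ : X →L[ℝ] ℝ) (Ξ : X →L[ℝ] X →L[ℝ] ℝ) (hΞsymm : ∀ a b : X, Ξ a b = Ξ b a)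
    (Ξt : X ⊗[ℝ] X →ₗ[ℝ] ℝ) (hΞt : ∀ a b : X, Ξt (a ⊗ₜ[ℝ] b) = Ξ a b) :
    (∀ v : X, F u + ((ξ (v - u) + (Ξ v v - Ξ u u) : ℝ) : EReal) ≤ F v) ↔
    (∀ (v : X) (w : X ⊗[ℝ] X),
      F u + ((ξ (v - u) + Ξt (w - u ⊗ₜ[ℝ] u) : ℝ) : EReal) ≤ convFotimes F (v, w)) := by
  have hc : F u = ((F u).toReal : EReal) := (EReal.coe_toReal hFu (hFbot u)).symm
  set c : ℝ := (F u).toReal with hcdef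
  -- the linear part
  set L : X × (X ⊗[ℝ] X) →ₗ[ℝ] ℝ :=
    (ξ.toLinearMap.comp (LinearMap.fst ℝ X (X ⊗[ℝ] X))) +
      (Ξt.comp (LinearMap.snd ℝ X (X ⊗[ℝ] X))) with hL
  have hLapply : ∀ p : X × (X ⊗[ℝ] X), L p = ξ p.1 + Ξt p.2 := fun p => rfl
  constructor
  · intro h v w
    apply le_sInf
    rintro r ⟨N, uu, α, hα, hsum1, hp, rfl⟩
    -- rewrite LHS as a real coercion
    rw [hc, ← EReal.coe_add]
    -- affine identity on the reals
    have key : c + (ξ (v - u) + Ξt (w - u ⊗ₜ[ℝ] u))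
        = ∑ i, α i * (c + (L (uu i, uu i ⊗ₜ[ℝ] uu i) - L (u, u ⊗ₜ[ℝ] u))) := by
      have hLvw : L (v, w) = ∑ i, α i * L (uu i, uu i ⊗ₜ[ℝ] uu i) := by
        have := congrArg L hp
        rw [map_sum] at this
        simp only [map_smul, smul_eq_mul] at this
        exact this
      have : ξ (v - u) + Ξt (w - u ⊗ₜ[ℝ] u) = L (v, w) - L (u, u ⊗ₜ[ℝ] u) := by
        simp [hLapply, map_sub]; ring
      rw [this, hLvw]
      rw [Finset.sum_congr rfl (fun i _ => by ring_nf :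
        ∀ i ∈ Finset.univ, α i * (c + (L (uu i, uu i ⊗ₜ[ℝ] uu i) - L (u, u ⊗ₜ[ℝ] u)))
          = α i * (c - L (u, u ⊗ₜ[ℝ] u)) + α i * L (uu i, uu i ⊗ₜ[ℝ] uu i))]
      rw [Finset.sum_add_distrib, ← Finset.sum_mul, hsum1]
      ring
    rw [key, ereal_coe_sum]
    apply Finset.sum_le_sum
    intro i _
    apply ereal_mul_le (hα i).1
    have hi := h (uu i)
    rw [hc, ← EReal.coe_add] at hi
    refine le_trans (EReal.coe_le_coe_iff.mpr (le_of_eq ?_)) hi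
    simp only [hLapply, map_sub]
    rw [hΞt (uu i) (uu i), hΞt u u]
    ring
  · intro h v
    have hv := h v (v ⊗ₜ[ℝ] v)
    have hΞeq : Ξt (v ⊗ₜ[ℝ] v - u ⊗ₜ[ℝ] u) = Ξ v v - Ξ u u := by
      rw [map_sub, hΞt, hΞt]
    rw [hΞeq] at hv
    refine hv.trans ?_
    apply sInf_le
    refine ⟨1, fun _ => v, fun _ => 1, fun i => ⟨zero_le_one, le_refl 1⟩, by simp, ?_, ?_⟩
    · simp
    · simp
end

section
/- Let X be a finite-dimensional real normed space and let S := span{v ⊗ v : v ∈ X} ⊆ X ⊗[ℝ] X be the subspace of symmetric tensors, with X × S carrying its (unique) finite-dimensional Hausdorff vector-space topology. For every u ∈ X and every ε > 0, the convex hull of the set {(u + v, (u + v) ⊗ (u + v)) : v ∈ X, ‖v‖ ≤ ε}, regarded as a subset of X × S, has nonempty interior. -/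
/-!
The points `(w, w ⊗ w)` with `w` close to `u` affinely span `X × S`. Second differences at `u`,
`(u + v, (u + v) ⊗ (u + v)) + (u - v, (u - v) ⊗ (u - v)) - 2 (u, u ⊗ u) = (0, 2 v ⊗ v)`,
give every square `v ⊗ v` after rescaling `v`, hence all of `S`; first differences then give
`X × 0`. In finite dimension a convex hull of a set with full affine span has nonempty interior.
-/

open scoped TensorProduct

/-- The subspace of symmetric tensors, spanned by the squares `v ⊗ v`. -/
noncomputable def symTensorSpan (X : Type*) [AddCommGroup X] [Module ℝ X] :
    Submodule ℝ (X ⊗[ℝ] X) :=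
  Submodule.span ℝ {w : X ⊗[ℝ] X | ∃ v : X, w = v ⊗ₜ[ℝ] v}

namespace symTensorSpan

variable {X : Type*} [AddCommGroup X] [Module ℝ X]

noncomputable def sq (v : X) : symTensorSpan X :=
  ⟨v ⊗ₜ[ℝ] v, Submodule.subset_span ⟨v, rfl⟩⟩

@[simp] lemma coe_sq (v : X) : (sq v : X ⊗[ℝ] X) = v ⊗ₜ[ℝ] v := rfl

lemma span_range_sq : Submodule.span ℝ (Set.range (sq (X := X))) = ⊤ := by
  have range_sq : Set.range (sq (X := X)) = (↑) ⁻¹' {w : X ⊗[ℝ] X | ∃ v, w = v ⊗ₜ v} := by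
    ext σ
    simp only [Set.mem_range, Set.mem_preimage, Set.mem_ofPred_eq, Subtype.ext_iff, coe_sq, eq_comm]
  rw [range_sq]
  exact Submodule.span_span_coe_preimage

lemma sq_smul (t : ℝ) (v : X) : sq (t • v) = t ^ 2 • sq v := by
  ext
  simp [TensorProduct.smul_tmul', TensorProduct.tmul_smul, smul_smul, pow_two]

lemma sq_add_add_sq_sub (u v : X) : sq (u + v) + sq (u - v) = (2 : ℝ) • (sq u + sq v) := by
  ext
  simp only [Submodule.coe_add, coe_sq, Submodule.coe_smul, TensorProduct.tmul_add,
    TensorProduct.add_tmul, TensorProduct.tmul_sub, TensorProduct.sub_tmul]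
  module

end symTensorSpan

open symTensorSpan Metric

noncomputable def graphSq {X : Type*} [AddCommGroup X] [Module ℝ X] (w : X) :
    X × symTensorSpan X :=
  (w, sq w)

lemma exists_pos_norm_smul_le {X : Type*} [NormedAddCommGroup X] [NormedSpace ℝ X] (v : X)
    {ε : ℝ} (hε : 0 < ε) : ∃ t : ℝ, 0 < t ∧ ‖t • v‖ ≤ ε := by
  refine ⟨ε / (‖v‖ + 1), by positivity, ?_⟩
  rw [norm_smul, Real.norm_of_nonneg (by positivity), div_mul_eq_mul_div,
    div_le_iff₀ (by positivity)]
  nlinarith [norm_nonneg v]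

section VectorSpan

variable {X : Type*} [NormedAddCommGroup X] [NormedSpace ℝ X] {u : X} {ε : ℝ}

lemma graphSq_add_sub_mem_vectorSpan (hε : 0 ≤ ε) {v : X} (hv : ‖v‖ ≤ ε) :
    graphSq (u + v) - graphSq u ∈ vectorSpan ℝ (graphSq '' closedBall u ε) :=
  vsub_mem_vectorSpan ℝ (Set.mem_image_of_mem _ (by simpa using hv))
    (Set.mem_image_of_mem _ (mem_closedBall_self hε))

lemma inr_sq_mem_vectorSpan (hε : 0 < ε) (v : X) :
    ((0 : X), sq v) ∈ vectorSpan ℝ (graphSq '' closedBall u ε) := by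
  obtain ⟨t, ht, htv⟩ := exists_pos_norm_smul_le v hε
  have h := add_mem (graphSq_add_sub_mem_vectorSpan (u := u) hε.le htv)
    (graphSq_add_sub_mem_vectorSpan (u := u) hε.le (v := -(t • v)) (by simpa using htv))
  have second_difference : graphSq (u + t • v) - graphSq u + (graphSq (u + -(t • v)) - graphSq u)
      = (2 * t ^ 2) • ((0 : X), sq v) := by
    have parallelogram := sq_add_add_sq_sub u (t • v)
    rw [sq_smul] at parallelogram
    refine Prod.ext ?_ ?_
    · simp [graphSq]
    · simp only [graphSq, Prod.snd_add, Prod.snd_sub, Prod.smul_snd, ← sub_eq_add_neg]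
      linear_combination (norm := module) parallelogram
  rwa [second_difference, Submodule.smul_mem_iff _ (by positivity)] at h

lemma inr_mem_vectorSpan (hε : 0 < ε) (σ : symTensorSpan X) :
    ((0 : X), σ) ∈ vectorSpan ℝ (graphSq '' closedBall u ε) := by
  have h : Submodule.span ℝ (Set.range (sq (X := X))) ≤
      (vectorSpan ℝ (graphSq '' closedBall u ε)).comap (LinearMap.inr ℝ X _) :=
    Submodule.span_le.2 (Set.range_subset_iff.2 (inr_sq_mem_vectorSpan hε))
  rw [span_range_sq] at h
  exact h Submodule.mem_top

lemma inl_mem_vectorSpan (hε : 0 < ε) (x : X) :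
    (x, (0 : symTensorSpan X)) ∈ vectorSpan ℝ (graphSq '' closedBall u ε) := by
  obtain ⟨t, ht, htx⟩ := exists_pos_norm_smul_le x hε
  have h := sub_mem (graphSq_add_sub_mem_vectorSpan (u := u) hε.le htx)
    (inr_mem_vectorSpan (u := u) hε (sq (u + t • x) - sq u))
  have first_difference : graphSq (u + t • x) - graphSq u - ((0 : X), sq (u + t • x) - sq u)
      = t • (x, (0 : symTensorSpan X)) := by
    ext <;> simp [graphSq]
  rwa [first_difference, Submodule.smul_mem_iff _ ht.ne'] at h

lemma vectorSpan_image_graphSq_closedBall (hε : 0 < ε) :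
    vectorSpan ℝ (graphSq '' closedBall u ε) = ⊤ :=
  Submodule.eq_top_iff'.2 fun ⟨x, σ⟩ => by
    simpa using add_mem (inl_mem_vectorSpan hε x) (inr_mem_vectorSpan hε σ)

lemma affineSpan_image_graphSq_closedBall (hε : 0 < ε) :
    affineSpan ℝ (graphSq '' closedBall u ε) = ⊤ :=
  (AffineSubspace.affineSpan_eq_top_iff_vectorSpan_eq_top_of_nonempty ℝ _ _
    ((nonempty_closedBall.2 hε.le).image _)).2 (vectorSpan_image_graphSq_closedBall hε)

end VectorSpan

/-- **Local convex hull of rank-one tensors has nonempty interior.**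
Let `X` be a finite-dimensional real normed space and `S := span {v ⊗ v}` the subspace
of symmetric tensors.  For every `u ∈ X` and `ε > 0`, the convex hull of
`{(u + v, (u + v) ⊗ (u + v)) : ‖v‖ ≤ ε}` has nonempty interior in `X × S`, the latter
carrying its unique finite-dimensional Hausdorff vector-space topology (here realized
by transporting along any linear equivalence onto a normed space `W`). -/
theorem interior_convexHull_diagonal_ball_nonempty
    {X : Type*} [NormedAddCommGroup X] [NormedSpace ℝ X] [FiniteDimensional ℝ X]
    (u : X) (ε : ℝ) (hε : 0 < ε)
    (W : Type*) [NormedAddCommGroup W] [NormedSpace ℝ W]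
    (e : (X × ↥(symTensorSpan X)) ≃ₗ[ℝ] W) :
    (interior (e '' (convexHull ℝ
      {p : X × ↥(symTensorSpan X) | ∃ v : X, ‖v‖ ≤ ε ∧ p.1 = u + v ∧
        (p.2 : X ⊗[ℝ] X) = (u + v) ⊗ₜ[ℝ] (u + v)}))).Nonempty := by
  have : FiniteDimensional ℝ W := e.finiteDimensional
  have graph_subset : graphSq '' closedBall u ε ⊆ {p : X × ↥(symTensorSpan X) | ∃ v : X,
      ‖v‖ ≤ ε ∧ p.1 = u + v ∧ (p.2 : X ⊗[ℝ] X) = (u + v) ⊗ₜ[ℝ] (u + v)} := by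
    rintro _ ⟨w, hw, rfl⟩
    exact ⟨w - u, mem_closedBall_iff_norm.1 hw, by abel, by simp [graphSq]⟩
  rw [← e.coe_toLinearMap, e.toLinearMap.image_convexHull,
    interior_convexHull_nonempty_iff_affineSpan_eq_top]
  exact e.toLinearMap.toAffineMap.span_eq_top_of_surjective e.surjective
    (eq_top_mono (affineSpan_mono ℝ graph_subset) (affineSpan_image_graphSq_closedBall hε))
end

section
/- Let d ∈ ℕ and let F : ℝ^d → ℝ ∪ {+∞} be diconvex, meaning there exists a proper convex function F̌ : ℝ^d × Sym_d(ℝ) → ℝ ∪ {+∞} on the product of ℝ^d with the space Sym_d(ℝ) of real symmetric d × d matrices such that F̌(u, u uᵀ) = F(u) for all u ∈ ℝ^d (u uᵀ denoting the outer product). Then F is lower semicontinuous if and only if there exists such a representative F̌ that is, in addition, lower semicontinuous. -/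
/-- The space `Sym_d(ℝ)` of real symmetric `d × d` matrices, as a submodule of the
matrix space. -/
def symMatrices (d : ℕ) : Submodule ℝ (Matrix (Fin d) (Fin d) ℝ) where
  carrier := {M | M.IsSymm}
  add_mem' := fun hA hB => hA.add hB
  zero_mem' := Matrix.isSymm_zero
  smul_mem' := fun c _ hM => hM.smul c

/-- The outer product `u uᵀ` as an element of `Sym_d(ℝ)`. -/
def outerSym {d : ℕ} (u : Fin d → ℝ) : ↥(symMatrices d) :=
  ⟨Matrix.vecMulVec u u, by
    show (Matrix.vecMulVec u u).IsSymm
    ext i j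
    simp [Matrix.vecMulVec_apply, Matrix.transpose_apply, mul_comm]⟩

/-!
A lower semicontinuous representative is the supremum `G` of all affine functions on
`ℝ^d × Sym_d(ℝ)` lying below `F` along the diagonal `u ↦ (u, u uᵀ)`: it is convex, lower
semicontinuous, and `G ≤ F` on the diagonal. Since `|v - u|² = tr M - 2 ⟪u, v⟫ + |u|²` at
`M = v vᵀ`, every paraboloid `v ↦ t - λ |v - u|²` is affine along the diagonal. For `t < F u` and
`λ` large it lies below `F`: near `u` by lower semicontinuity of `F`, far from `u` because `F`
grows at least like `K₀ - K₁ |v|²`, a bound inherited from an affine minorant of the given convex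
representative (Hahn–Banach applied to its epigraph). Hence `G = F` on the diagonal. When
`F ≡ ⊤` this supremum is not proper, and the indicator of the half-space `tr M ≤ -1` serves
instead. Conversely, `F` is an lsc representative composed with the continuous diagonal map.
-/

open Filter Topology Matrix

section ConvexEReal

variable {V : Type*} [AddCommGroup V] [Module ℝ V]

def ConvexEReal (f : V → EReal) : Prop :=
  ∀ p q : V, ∀ θ : ℝ, 0 ≤ θ → θ ≤ 1 →
    f (θ • p + (1 - θ) • q) ≤ (θ : EReal) * f p + ((1 - θ : ℝ) : EReal) * f q

theorem ConvexEReal.convexOn_toReal {f : V → EReal} (hf : ConvexEReal f) (hbot : ∀ p, f p ≠ ⊥) :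
    ConvexOn ℝ {p | f p ≠ ⊤} (fun p => (f p).toReal) := by
  have key : ∀ p, f p ≠ ⊤ → ∀ q, f q ≠ ⊤ → ∀ a b : ℝ, 0 ≤ a → 0 ≤ b → a + b = 1 →
      f (a • p + b • q) ≤ ((a * (f p).toReal + b * (f q).toReal : ℝ) : EReal) := by
    intro p hp q hq a b ha hb hab
    obtain rfl : b = 1 - a := by linarith
    rw [EReal.coe_add, EReal.coe_mul, EReal.coe_mul, EReal.coe_toReal hp (hbot p),
      EReal.coe_toReal hq (hbot q)]
    exact hf p q a ha (by linarith)
  refine ⟨fun p hp q hq a b ha hb hab => ?_, fun p hp q hq a b ha hb hab => ?_⟩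
  · exact ne_top_of_le_ne_top (EReal.coe_ne_top _) (key p hp q hq a b ha hb hab)
  · exact EReal.toReal_le_toReal (key p hp q hq a b ha hb hab) (hbot _) (EReal.coe_ne_top _)
      |>.trans_eq (EReal.toReal_coe _)

end ConvexEReal

section AffineMinorant

variable {V : Type*} [NormedAddCommGroup V] [NormedSpace ℝ V] [FiniteDimensional ℝ V]
  {s : Set V} {g : V → ℝ}

theorem ConvexOn.mk_mem_interior_epigraph (hg : ConvexOn ℝ s g) {x : V} (hx : x ∈ interior s)
    {r : ℝ} (hr : g x < r) : (x, r) ∈ interior {q : V × ℝ | q.1 ∈ s ∧ g q.1 ≤ q.2} := by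
  have hcont : ContinuousAt g x :=
    (hg.continuousOn_interior x hx).continuousAt (isOpen_interior.mem_nhds hx)
  have hnear : ∀ᶠ p in 𝓝 x, p ∈ s ∧ g p < (g x + r) / 2 :=
    Eventually.and (mem_interior_iff_mem_nhds.1 hx) (hcont.eventually (gt_mem_nhds (by linarith)))
  have habove : ∀ᶠ r' in 𝓝 r, (g x + r) / 2 < r' := lt_mem_nhds (by linarith)
  rw [mem_interior_iff_mem_nhds, nhds_prod_eq]
  filter_upwards [hnear.prod_mk habove] with q ⟨⟨hqs, hq⟩, hr⟩
  exact ⟨hqs, by linarith⟩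

theorem ConvexOn.exists_affine_le_of_interior_nonempty (hg : ConvexOn ℝ s g)
    (hs : (interior s).Nonempty) :
    ∃ (ℓ : V →ₗ[ℝ] ℝ) (c : ℝ), ∀ p ∈ s, ℓ p + c ≤ g p := by
  obtain ⟨x, hx⟩ := hs
  set E : Set (V × ℝ) := {q | q.1 ∈ s ∧ g q.1 ≤ q.2}
  have hE : Convex ℝ E := hg.convex_epigraph
  have hxE : (x, g x + 1) ∈ interior E := hg.mk_mem_interior_epigraph hx (lt_add_one _)
  obtain ⟨φ, hφ⟩ := geometric_hahn_banach_open_point hE.interior isOpen_interior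
    (fun h => absurd (interior_subset h : (x, g x - 1) ∈ E).2 (by simp))
  -- `E` has nonempty interior, so it lies in the closure of its interior
  have hφE : ∀ q ∈ E, φ q ≤ φ (x, g x - 1) := by
    have : closure (interior E) ⊆ {q | φ q ≤ φ (x, g x - 1)} :=
      closure_minimal (fun q hq => (hφ q hq).le) (isClosed_le φ.continuous continuous_const)
    rw [hE.closure_interior_eq_closure_of_nonempty_interior ⟨_, hxE⟩] at this
    exact fun q hq => this (subset_closure hq)
  have hφ_apply : ∀ p r, φ (p, r) = φ (p, 0) + r * φ (0, 1) := fun p r => by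
    rw [← smul_eq_mul, ← map_smul, ← map_add]
    simp
  have hβ : φ (0, 1) < 0 := by
    have := hφ _ hxE
    rw [hφ_apply x, hφ_apply x (g x - 1)] at this
    nlinarith
  refine ⟨-(φ (0, 1))⁻¹ • (φ.toLinearMap ∘ₗ LinearMap.inl ℝ V ℝ),
    (φ (0, 1))⁻¹ * φ (x, g x - 1), fun p hp => ?_⟩
  have h := hφE (p, g p) ⟨hp, le_rfl⟩
  rw [hφ_apply p] at h
  have key : (φ (x, g x - 1) - φ (p, 0)) / φ (0, 1) ≤ g p :=
    (div_le_iff_of_neg hβ).2 (by linarith)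
  convert key using 1
  simp only [LinearMap.smul_apply, LinearMap.comp_apply, LinearMap.inl_apply,
    ContinuousLinearMap.coe_coe, smul_eq_mul]
  ring

theorem ConvexOn.exists_affine_le (hg : ConvexOn ℝ s g) (hs : s.Nonempty) :
    ∃ (ℓ : V →ₗ[ℝ] ℝ) (c : ℝ), ∀ p ∈ s, ℓ p + c ≤ g p := by
  obtain ⟨p₀, hp₀⟩ := hs
  -- work inside the span `W` of `s - p₀`, where the translated domain has nonempty interior
  set t : Set V := (p₀ + ·) ⁻¹' s
  set W := Submodule.span ℝ t
  have hconv : ConvexOn ℝ (W.subtype ⁻¹' t) ((g ∘ (p₀ + ·)) ∘ W.subtype) :=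
    (hg.translate_right p₀).comp_linearMap W.subtype
  have hint : (interior (W.subtype ⁻¹' t)).Nonempty := by
    rw [hconv.1.interior_nonempty_iff_affineSpan_eq_top,
      AffineSubspace.affineSpan_eq_top_iff_vectorSpan_eq_top_of_nonempty ℝ W W
        ⟨0, by simpa [t] using hp₀⟩, vectorSpan_eq_span_vsub_set_right ℝ (p := (0 : W))
        (by simpa [t] using hp₀)]
    simp only [vsub_eq_sub, sub_zero, Set.image_id']
    exact Submodule.span_span_coe_preimage
  obtain ⟨ℓ, c, hℓ⟩ := hconv.exists_affine_le_of_interior_nonempty hint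
  obtain ⟨ℓ', hℓ'⟩ := LinearMap.exists_extend ℓ
  refine ⟨ℓ', c - ℓ' p₀, fun p hp => ?_⟩
  have hpW : p - p₀ ∈ W := Submodule.subset_span (by simpa [t] using hp)
  have := hℓ ⟨p - p₀, hpW⟩ (by simpa [t] using hp)
  rw [← hℓ'] at this
  simp only [LinearMap.coe_comp, Submodule.coe_subtype, Function.comp_apply, map_sub,
    add_sub_cancel] at this
  linarith

theorem ConvexEReal.exists_affine_le {f : V → EReal} (hf : ConvexEReal f) (hbot : ∀ p, f p ≠ ⊥)
    (hproper : ∃ p, f p ≠ ⊤) :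
    ∃ (ℓ : V →ₗ[ℝ] ℝ) (c : ℝ), ∀ p, ((ℓ p + c : ℝ) : EReal) ≤ f p := by
  obtain ⟨ℓ, c, hℓ⟩ := (hf.convexOn_toReal hbot).exists_affine_le hproper
  refine ⟨ℓ, c, fun p => ?_⟩
  by_cases hp : f p = ⊤
  · simp [hp]
  · simpa [EReal.coe_toReal hp (hbot p)] using EReal.coe_le_coe_iff.2 (hℓ p hp)

end AffineMinorant

section SupAffine

variable {V ι : Type*} [AddCommGroup V] [Module ℝ V]

noncomputable def supAffine (ℓ : ι → V →ₗ[ℝ] ℝ) (c : ι → ℝ) (p : V) : EReal :=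
  ⨆ i, ((ℓ i p + c i : ℝ) : EReal)

variable (ℓ : ι → V →ₗ[ℝ] ℝ) (c : ι → ℝ)

theorem le_supAffine (i : ι) (p : V) : ((ℓ i p + c i : ℝ) : EReal) ≤ supAffine ℓ c p :=
  le_iSup (fun i => ((ℓ i p + c i : ℝ) : EReal)) i

theorem supAffine_ne_bot [Nonempty ι] (p : V) : supAffine ℓ c p ≠ ⊥ :=
  ne_bot_of_le_ne_bot (EReal.coe_ne_bot _) (le_supAffine ℓ c (Classical.arbitrary ι) p)

theorem convexEReal_supAffine : ConvexEReal (supAffine ℓ c) := by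
  intro p q θ h0 h1
  refine iSup_le fun i => ?_
  have h : ℓ i (θ • p + (1 - θ) • q) + c i = θ * (ℓ i p + c i) + (1 - θ) * (ℓ i q + c i) := by
    simp only [map_add, map_smul, smul_eq_mul]
    ring
  rw [h, EReal.coe_add, EReal.coe_mul, EReal.coe_mul]
  gcongr <;> exact le_supAffine ℓ c i _

theorem lowerSemicontinuous_supAffine [TopologicalSpace V] [IsTopologicalAddGroup V]
    [ContinuousSMul ℝ V] [T2Space V] [FiniteDimensional ℝ V] :
    LowerSemicontinuous (supAffine ℓ c) :=
  lowerSemicontinuous_iSup fun i => (continuous_coe_real_ereal.comp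
    ((ℓ i).continuous_of_finiteDimensional.add continuous_const)).lowerSemicontinuous

end SupAffine

section DotProduct

variable {n : Type*} [Fintype n]

theorem dotProduct_self_nonneg (v : n → ℝ) : 0 ≤ v ⬝ᵥ v :=
  Finset.sum_nonneg fun i _ => mul_self_nonneg (v i)

theorem sq_norm_le_dotProduct_self (v : n → ℝ) : ‖v‖ ^ 2 ≤ v ⬝ᵥ v := by
  refine (Real.le_sqrt (norm_nonneg v) (dotProduct_self_nonneg v)).1 ?_
  refine (pi_norm_le_iff_of_nonneg (Real.sqrt_nonneg _)).2 fun i => Real.abs_le_sqrt ?_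
  simpa [dotProduct, sq] using
    Finset.single_le_sum (fun j _ => mul_self_nonneg (v j)) (Finset.mem_univ i)

end DotProduct

section OuterSym

variable {d : ℕ}

theorem continuous_outerSym : Continuous (outerSym : (Fin d → ℝ) → symMatrices d) :=
  (continuous_matrix fun i j => (continuous_apply i).mul (continuous_apply j)).subtype_mk _

variable (d) in
def traceSnd : (Fin d → ℝ) × symMatrices d →ₗ[ℝ] ℝ :=
  traceLinearMap (Fin d) ℝ ℝ ∘ₗ (symMatrices d).subtype ∘ₗ LinearMap.snd ℝ _ _

theorem traceSnd_apply (p : (Fin d → ℝ) × symMatrices d) :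
    traceSnd d p = (p.2 : Matrix (Fin d) (Fin d) ℝ).trace :=
  rfl

theorem traceSnd_outerSym (v : Fin d → ℝ) : traceSnd d (v, outerSym v) = v ⬝ᵥ v :=
  trace_vecMulVec v v

theorem exists_affine_outerSym_eq_dotProduct_sub_self (u : Fin d → ℝ) :
    ∃ (ℓ : (Fin d → ℝ) × symMatrices d →ₗ[ℝ] ℝ) (c : ℝ),
      ∀ v, ℓ (v, outerSym v) + c = (v - u) ⬝ᵥ (v - u) := by
  refine ⟨traceSnd d - (2 : ℝ) • (dotProductBilin ℝ ℝ u ∘ₗ LinearMap.fst ℝ _ _), u ⬝ᵥ u,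
    fun v => ?_⟩
  simp only [LinearMap.sub_apply, LinearMap.smul_apply, traceSnd_outerSym, LinearMap.comp_apply,
    LinearMap.fst_apply, dotProductBilin_apply_apply, smul_eq_mul, sub_dotProduct, dotProduct_sub,
    dotProduct_comm v u]
  ring

end OuterSym

section QuadraticMinorant

attribute [local instance] Matrix.normedAddCommGroup Matrix.normedSpace

variable {d : ℕ}

theorem norm_outerSym_le (v : Fin d → ℝ) : ‖outerSym v‖ ≤ ‖v‖ ^ 2 := by
  change ‖vecMulVec v v‖ ≤ ‖v‖ ^ 2
  refine (Matrix.norm_le_iff (by positivity)).2 fun i j => ?_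
  rw [vecMulVec_apply, norm_mul, sq]
  exact mul_le_mul (norm_le_pi_norm v i) (norm_le_pi_norm v j) (norm_nonneg _) (norm_nonneg _)

theorem norm_prod_outerSym_le (v : Fin d → ℝ) : ‖(v, outerSym v)‖ ≤ 1 + v ⬝ᵥ v := by
  have h₁ : ‖v‖ ≤ 1 + ‖v‖ ^ 2 := by nlinarith [sq_nonneg (‖v‖ - 1)]
  have h₂ := sq_norm_le_dotProduct_self v
  rw [Prod.norm_def]
  exact max_le (by linarith) (by linarith [norm_outerSym_le v])

theorem ConvexEReal.exists_quadratic_minorant_outerSym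
    {F : (Fin d → ℝ) × symMatrices d → EReal} (hF : ConvexEReal F) (hbot : ∀ p, F p ≠ ⊥)
    (hproper : ∃ p, F p ≠ ⊤) :
    ∃ K₀ K₁ : ℝ, 0 ≤ K₁ ∧ ∀ v, ((K₀ - K₁ * (v ⬝ᵥ v) : ℝ) : EReal) ≤ F (v, outerSym v) := by
  obtain ⟨ℓ, c, hℓ⟩ := hF.exists_affine_le hbot hproper
  obtain ⟨K, hK, hℓK⟩ := ContinuousLinearMap.bound (σ₁₂ := RingHom.id ℝ)
    ⟨ℓ, ℓ.continuous_of_finiteDimensional⟩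
  refine ⟨c - K, K, hK.le, fun v => (EReal.coe_le_coe_iff.2 ?_).trans (hℓ _)⟩
  have hv : |ℓ (v, outerSym v)| ≤ K * ‖(v, outerSym v)‖ := hℓK _
  calc c - K - K * (v ⬝ᵥ v) = c - K * (1 + v ⬝ᵥ v) := by ring
    _ ≤ c - K * ‖(v, outerSym v)‖ := by gcongr; exact norm_prod_outerSym_le v
    _ ≤ ℓ (v, outerSym v) + c := by linarith [neg_abs_le (ℓ (v, outerSym v))]

end QuadraticMinorant

section Representative

variable {d : ℕ}

theorem LowerSemicontinuous.exists_paraboloid_le {F : (Fin d → ℝ) → EReal}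
    (hF : LowerSemicontinuous F) {K₀ K₁ : ℝ} (hK₁ : 0 ≤ K₁)
    (hquad : ∀ v, ((K₀ - K₁ * (v ⬝ᵥ v) : ℝ) : EReal) ≤ F v) {u : Fin d → ℝ} {t : ℝ}
    (ht : (t : EReal) < F u) :
    ∃ a : ℝ, ∀ v, ((t - a * ((v - u) ⬝ᵥ (v - u)) : ℝ) : EReal) ≤ F v := by
  obtain ⟨ε, hε, hball⟩ := Metric.eventually_nhds_iff.1 (hF u t ht)
  set M := max 0 (t - K₀ + 2 * K₁ * (u ⬝ᵥ u))
  have hM : 0 ≤ M := le_max_left _ _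
  refine ⟨2 * K₁ + M / ε ^ 2, fun v => ?_⟩
  set D := (v - u) ⬝ᵥ (v - u)
  have hD : 0 ≤ D := dotProduct_self_nonneg _
  rcases lt_or_ge D (ε ^ 2) with hnear | hfar
  · have hdist : dist v u < ε := by
      rw [dist_eq_norm]
      exact lt_of_pow_lt_pow_left₀ 2 hε.le ((sq_norm_le_dotProduct_self (v - u)).trans_lt hnear)
    refine le_trans (EReal.coe_le_coe_iff.2 ?_) (hball hdist).le
    have : 0 ≤ (2 * K₁ + M / ε ^ 2) * D := by positivity
    linarith
  · refine le_trans (EReal.coe_le_coe_iff.2 ?_) (hquad v)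
    have hv : v ⬝ᵥ v ≤ 2 * D + 2 * (u ⬝ᵥ u) := by
      have := dotProduct_self_nonneg (v - u - u)
      simp only [D, sub_dotProduct, dotProduct_sub, dotProduct_comm v u] at this ⊢
      linarith
    have hMD : M ≤ M / ε ^ 2 * D := by
      rw [div_mul_eq_mul_div, le_div_iff₀ (by positivity)]
      nlinarith
    nlinarith [le_max_right 0 (t - K₀ + 2 * K₁ * (u ⬝ᵥ u))]

theorem exists_lsc_representative {F : (Fin d → ℝ) → EReal} (hF : LowerSemicontinuous F)
    {K₀ K₁ : ℝ} (hK₁ : 0 ≤ K₁) (hquad : ∀ v, ((K₀ - K₁ * (v ⬝ᵥ v) : ℝ) : EReal) ≤ F v)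
    (hproper : ∃ u, F u ≠ ⊤) :
    ∃ G : (Fin d → ℝ) × symMatrices d → EReal, (∀ p, G p ≠ ⊥) ∧ (∃ p, G p ≠ ⊤) ∧
      ConvexEReal G ∧ (∀ u, G (u, outerSym u) = F u) ∧ LowerSemicontinuous G := by
  let ι := {a : ((Fin d → ℝ) × symMatrices d →ₗ[ℝ] ℝ) × ℝ //
    ∀ v, ((a.1 (v, outerSym v) + a.2 : ℝ) : EReal) ≤ F v}
  set G := supAffine (fun a : ι => a.1.1) (fun a => a.1.2)
  have hG_le : ∀ u, G (u, outerSym u) ≤ F u := fun u => iSup_le fun a => a.2 u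
  have hle_G : ∀ u (t : ℝ), (t : EReal) < F u → (t : EReal) ≤ G (u, outerSym u) := by
    intro u t ht
    obtain ⟨a, ha⟩ := hF.exists_paraboloid_le hK₁ hquad ht
    obtain ⟨ℓ, c, hℓ⟩ := exists_affine_outerSym_eq_dotProduct_sub_self u
    have hval : ∀ v, ((-a) • ℓ) (v, outerSym v) + (t - a * c) = t - a * ((v - u) ⬝ᵥ (v - u)) :=
      fun v => by rw [← hℓ, LinearMap.smul_apply, smul_eq_mul]; ring
    simpa only [hval, sub_self, dotProduct_zero, mul_zero, sub_zero] using
      le_supAffine (fun a : ι => a.1.1) (fun a : ι => a.1.2)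
        ⟨((-a) • ℓ, t - a * c), fun v => by simpa only [hval] using ha v⟩ (u, outerSym u)
  have : Nonempty ι := ⟨⟨((-K₁) • traceSnd d, K₀), fun v => by
    simpa [traceSnd_outerSym, sub_eq_neg_add] using hquad v⟩⟩
  refine ⟨G, supAffine_ne_bot _ _, ?_, convexEReal_supAffine _ _,
    fun u => le_antisymm (hG_le u) ?_, lowerSemicontinuous_supAffine _ _⟩
  · obtain ⟨u, hu⟩ := hproper
    exact ⟨_, ne_top_of_le_ne_top hu (hG_le u)⟩
  · by_contra! h
    obtain ⟨t, hGt, htF⟩ := EReal.exists_between_coe_real h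
    exact (hle_G u t htF).not_gt hGt

theorem exists_lsc_representative_top (hd : 0 < d) :
    ∃ G : (Fin d → ℝ) × symMatrices d → EReal, (∀ p, G p ≠ ⊥) ∧ (∃ p, G p ≠ ⊤) ∧
      ConvexEReal G ∧ (∀ u, G (u, outerSym u) = ⊤) ∧ LowerSemicontinuous G := by
  -- the indicator function of the half-space `trace M ≤ -1`, which misses the diagonal
  set G := supAffine (fun r : NNReal => (r : ℝ) • traceSnd d) (fun r => r)
  have hmem : (-1 : Matrix (Fin d) (Fin d) ℝ) ∈ symMatrices d := isSymm_one.neg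
  refine ⟨G, supAffine_ne_bot _ _, ⟨(0, ⟨-1, hmem⟩), ?_⟩, convexEReal_supAffine _ _,
    fun u => ?_, lowerSemicontinuous_supAffine _ _⟩
  · refine ne_top_of_le_ne_top (EReal.coe_ne_top 0) (iSup_le fun r => EReal.coe_le_coe_iff.2 ?_)
    have : (1 : ℝ) ≤ d := by exact_mod_cast hd
    simp only [LinearMap.smul_apply, traceSnd_apply, trace_neg, trace_one, Fintype.card_fin,
      smul_eq_mul]
    nlinarith [r.2]
  · refine (EReal.eq_top_iff_forall_lt _).2 fun x => ?_
    refine (EReal.coe_lt_coe_iff.2 ?_).trans_le (le_supAffine _ _ (x + 1).toNNReal _)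
    simp only [LinearMap.smul_apply, traceSnd_outerSym, smul_eq_mul]
    nlinarith [Real.le_coe_toNNReal (x + 1),
      mul_nonneg (x + 1).toNNReal.coe_nonneg (dotProduct_self_nonneg u)]

end Representative

theorem diconvex_lsc_iff_exists_lsc_representative_general
    (d : ℕ) (F : (Fin d → ℝ) → EReal)
    (hdiconvex : ∃ Fc : (Fin d → ℝ) × ↥(symMatrices d) → EReal,
      (∀ p, Fc p ≠ ⊥) ∧ (∃ p, Fc p ≠ ⊤) ∧
      (∀ p q : (Fin d → ℝ) × ↥(symMatrices d), ∀ θ : ℝ, 0 ≤ θ → θ ≤ 1 →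
        Fc (θ • p + (1 - θ) • q) ≤ (θ : EReal) * Fc p + ((1 - θ : ℝ) : EReal) * Fc q) ∧
      (∀ u : Fin d → ℝ, Fc (u, outerSym u) = F u)) :
    LowerSemicontinuous F ↔
    (∃ Fc : (Fin d → ℝ) × ↥(symMatrices d) → EReal,
      (∀ p, Fc p ≠ ⊥) ∧ (∃ p, Fc p ≠ ⊤) ∧
      (∀ p q : (Fin d → ℝ) × ↥(symMatrices d), ∀ θ : ℝ, 0 ≤ θ → θ ≤ 1 →
        Fc (θ • p + (1 - θ) • q) ≤ (θ : EReal) * Fc p + ((1 - θ : ℝ) : EReal) * Fc q) ∧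
      (∀ u : Fin d → ℝ, Fc (u, outerSym u) = F u) ∧
      LowerSemicontinuous Fc) := by
  obtain ⟨Fc, hbot, hproper, hconv, hrep⟩ := hdiconvex
  refine ⟨fun hF => ?_, fun ⟨G, _, _, _, hG, hlsc⟩ => ?_⟩
  · by_cases htop : ∀ u, F u = ⊤
    · obtain rfl : F = fun _ => ⊤ := funext htop
      rcases Nat.eq_zero_or_pos d with rfl | hd
      · -- in dimension zero every point lies on the diagonal
        obtain ⟨p, hp⟩ := hproper
        exact absurd (by rw [Subsingleton.elim p (p.1, outerSym p.1), hrep]) hp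
      · exact exists_lsc_representative_top hd
    · simp only [not_forall] at htop
      obtain ⟨K₀, K₁, hK₁, hquad⟩ :=
        ConvexEReal.exists_quadratic_minorant_outerSym hconv hbot hproper
      exact exists_lsc_representative hF hK₁ (fun v => hrep v ▸ hquad v) htop
  · rw [show F = fun u => G (u, outerSym u) from funext fun u => (hG u).symm]
    exact hlsc.comp (continuous_id.prodMk continuous_outerSym)

/-- **Lower semicontinuity in finite dimensions.**
A diconvex mapping `F : ℝ^d → ℝ ∪ {+∞}` (i.e. one admitting a proper convex
representative `F̌ : ℝ^d × Sym_d(ℝ) → ℝ ∪ {+∞}` with `F̌ (u, u uᵀ) = F u`) is lower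
semicontinuous if and only if it admits such a representative which is moreover lower
semicontinuous. -/
theorem diconvex_lsc_iff_exists_lsc_representative
    (d : ℕ) (F : (Fin d → ℝ) → EReal) (hFbot : ∀ u, F u ≠ ⊥)
    (hdiconvex : ∃ Fc : (Fin d → ℝ) × ↥(symMatrices d) → EReal,
      (∀ p, Fc p ≠ ⊥) ∧ (∃ p, Fc p ≠ ⊤) ∧
      (∀ p q : (Fin d → ℝ) × ↥(symMatrices d), ∀ θ : ℝ, 0 ≤ θ → θ ≤ 1 →
        Fc (θ • p + (1 - θ) • q) ≤ (θ : EReal) * Fc p + ((1 - θ : ℝ) : EReal) * Fc q) ∧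
      (∀ u : Fin d → ℝ, Fc (u, outerSym u) = F u)) :
    LowerSemicontinuous F ↔
    (∃ Fc : (Fin d → ℝ) × ↥(symMatrices d) → EReal,
      (∀ p, Fc p ≠ ⊥) ∧ (∃ p, Fc p ≠ ⊤) ∧
      (∀ p q : (Fin d → ℝ) × ↥(symMatrices d), ∀ θ : ℝ, 0 ≤ θ → θ ≤ 1 →
        Fc (θ • p + (1 - θ) • q) ≤ (θ : EReal) * Fc p + ((1 - θ : ℝ) : EReal) * Fc q) ∧
      (∀ u : Fin d → ℝ, Fc (u, outerSym u) = F u) ∧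
      LowerSemicontinuous Fc) :=
  diconvex_lsc_iff_exists_lsc_representative_general d F hdiconvex
end

section
/- Let E and G be real Banach spaces with E separable, and let X := E* and Y := G* be their dual spaces; say a sequence (uₙ) in X converges weakly-* to u if uₙ(e) → u(e) for all e ∈ E (and analogously in Y). Let A : X → Y be a bounded linear map and B : X × X → Y a bounded symmetric bilinear map, set K(u) := A(u) + B(u, u), and assume K is sequentially weak-*-to-weak-* continuous. Let R : X → [0, +∞] be proper and sequentially weak-* lower semicontinuous, let p ≥ 1, α > 0 and g^δ ∈ Y, and define the Tikhonov functional J_α(u) := ‖K(u) − g^δ‖^p + α R(u). If J_α is coercive, i.e. J_α(uₙ) → +∞ for every sequence with ‖uₙ‖ → +∞, then J_α attains its minimum: there exists u_α ∈ X with J_α(u_α) ≤ J_α(u) for all u ∈ X. (Well-posedness of the dilinear Tikhonov regularization.) -/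
/-! The direct method. A minimizing sequence of the Tikhonov functional has bounded values, so by
coercivity it is norm-bounded, and sequential Banach–Alaoglu (here `E` is separable) extracts a
weak-* convergent subsequence. Along it the functional is lower semicontinuous: the residual
`K uₙ - g^δ` converges weak-* by assumption, the dual norm is weak-* lower semicontinuous, and
so is `R`. -/

open Filter
open scoped ENNReal Topology

/-- Sequential weak-* convergence in the dual of a Banach space `E`. -/
def WeakStarSeqTendsto {E : Type*} [NormedAddCommGroup E] [NormedSpace ℝ E]
    (un : ℕ → (E →L[ℝ] ℝ)) (u : E →L[ℝ] ℝ) : Prop :=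
  ∀ e : E, Tendsto (fun n => un n e) atTop (𝓝 (u e))

theorem ENNReal.liminf_add_liminf_le_liminf_add (a b : ℕ → ℝ≥0∞) :
    liminf a atTop + liminf b atTop ≤ liminf (a + b) atTop := by
  have hmono : ∀ c : ℕ → ℝ≥0∞, Monotone fun N => ⨅ n ≥ N, c n :=
    fun c _ _ hNM => biInf_mono fun _ hn => hNM.trans hn
  simp only [liminf_eq_iSup_iInf_of_nat]
  rw [ENNReal.iSup_add_iSup_of_monotone (hmono a) (hmono b)]
  exact iSup_mono fun N => le_iInf₂ fun n hn => add_le_add (iInf₂_le n hn) (iInf₂_le n hn)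

theorem exists_forall_le_of_exists_subseq_le_liminf {α : Type*} [Nonempty α] (J : α → ℝ≥0∞)
    (h : ∀ x : ℕ → α, (∃ M ≠ ⊤, ∀ n, J (x n) ≤ M) →
      ∃ u, ∃ φ : ℕ → ℕ, StrictMono φ ∧ J u ≤ liminf (fun k => J (x (φ k))) atTop) :
    ∃ u, ∀ v, J u ≤ J v := by
  set m := ⨅ v, J v
  rcases eq_or_ne m ⊤ with hm | hm
  · exact ⟨Classical.arbitrary α, fun v => by simp [iInf_eq_top.1 hm v]⟩
  have hε : ∀ n : ℕ, ((n : ℝ≥0∞) + 1)⁻¹ ≠ 0 := by simp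
  choose x hx using fun n => iInf_lt_iff.1 (ENNReal.lt_add_right hm (hε n))
  have hxm : Tendsto (fun n => J (x n)) atTop (𝓝 m) := by
    have hupper : Tendsto (fun n : ℕ => m + ((n : ℝ≥0∞) + 1)⁻¹) atTop (𝓝 m) := by
      simpa using tendsto_const_nhds.add
        (ENNReal.tendsto_inv_nat_nhds_zero.comp (tendsto_add_atTop_nat 1))
    exact tendsto_of_tendsto_of_tendsto_of_le_of_le tendsto_const_nhds hupper
      (fun n => iInf_le _ _) (fun n => (hx n).le)
  have hxM : ∀ n, J (x n) ≤ m + 1 := fun n =>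
    (hx n).le.trans (add_le_add_right (ENNReal.inv_le_one.2 le_add_self) m)
  obtain ⟨u, φ, hφ, hu⟩ := h x ⟨m + 1, ENNReal.add_ne_top.2 ⟨hm, ENNReal.one_ne_top⟩, hxM⟩
  refine ⟨u, fun v => ?_⟩
  calc J u ≤ liminf (fun k => J (x (φ k))) atTop := hu
    _ = m := (hxm.comp hφ.tendsto_atTop).liminf_eq
    _ ≤ J v := iInf_le _ v

theorem exists_norm_le_of_le_of_coercive {X : Type*} [Norm X] (J : X → ℝ≥0∞)
    (hJ : ∀ x : ℕ → X, Tendsto (fun n => ‖x n‖) atTop atTop →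
      Tendsto (fun n => J (x n)) atTop (𝓝 ⊤))
    {M : ℝ≥0∞} (hM : M ≠ ⊤) : ∃ C, ∀ u, J u ≤ M → ‖u‖ ≤ C := by
  by_contra! h
  choose x hxM hx using fun n : ℕ => h n
  have hnorm : Tendsto (fun n => ‖x n‖) atTop atTop :=
    tendsto_atTop_mono (fun n => (hx n).le) tendsto_natCast_atTop_atTop
  obtain ⟨n, hn⟩ := ((hJ x hnorm).eventually (lt_mem_nhds hM.lt_top)).exists
  exact (hxM n).not_gt hn

namespace WeakStarSeqTendsto

variable {E : Type*} [NormedAddCommGroup E] [NormedSpace ℝ E]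
  {un : ℕ → E →L[ℝ] ℝ} {u : E →L[ℝ] ℝ}

theorem exists_subseq_of_norm_le [TopologicalSpace.SeparableSpace E] {C : ℝ}
    (hC : ∀ n, ‖un n‖ ≤ C) :
    ∃ u : E →L[ℝ] ℝ, ∃ φ : ℕ → ℕ, StrictMono φ ∧ WeakStarSeqTendsto (fun k => un (φ k)) u := by
  obtain ⟨u, -, φ, hφ, hu⟩ := WeakDual.isSeqCompact_closedBall ℝ E 0 C
    (x := fun n => StrongDual.toWeakDual (un n)) (fun n => by simpa using hC n)
  exact ⟨WeakDual.toStrongDual u, φ, hφ, fun e => ((WeakDual.eval_continuous e).tendsto u).comp hu⟩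

theorem enorm_le_liminf (h : WeakStarSeqTendsto un u) :
    ‖u‖ₑ ≤ liminf (fun n => ‖un n‖ₑ) atTop := by
  refine u.opENorm_le_bound fun e => ?_
  calc ‖u e‖ₑ = liminf (fun n => ‖un n e‖ₑ) atTop := (h e).enorm.liminf_eq.symm
    _ ≤ liminf (fun n => ‖un n‖ₑ * ‖e‖ₑ) atTop :=
      liminf_le_liminf (Eventually.of_forall fun n => (un n).le_opENorm e)
    _ = liminf (fun n => ‖un n‖ₑ) atTop * ‖e‖ₑ :=
      (ENNReal.liminf_mul_const_of_ne_top enorm_ne_top).trans (mul_comm _ _)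

theorem ofReal_norm_rpow_le_liminf (h : WeakStarSeqTendsto un u) {p : ℝ} (hp : 0 < p) :
    ENNReal.ofReal (‖u‖ ^ p) ≤ liminf (fun n => ENNReal.ofReal (‖un n‖ ^ p)) atTop := by
  simp only [← ENNReal.ofReal_rpow_of_nonneg (norm_nonneg _) hp.le, ofReal_norm]
  calc ‖u‖ₑ ^ p ≤ (liminf (fun n => ‖un n‖ₑ) atTop) ^ p :=
        ENNReal.rpow_le_rpow h.enorm_le_liminf hp.le
    _ = liminf (fun n => ‖un n‖ₑ ^ p) atTop := (ENNReal.orderIsoRpow p hp).liminf_apply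

end WeakStarSeqTendsto

theorem dilinear_tikhonov_wellposed_general
    {E G : Type*} [NormedAddCommGroup E] [NormedSpace ℝ E]
    [TopologicalSpace.SeparableSpace E]
    [NormedAddCommGroup G] [NormedSpace ℝ G]
    (A : (E →L[ℝ] ℝ) →L[ℝ] (G →L[ℝ] ℝ))
    (B : (E →L[ℝ] ℝ) →L[ℝ] (E →L[ℝ] ℝ) →L[ℝ] (G →L[ℝ] ℝ))
    (hK : ∀ (un : ℕ → (E →L[ℝ] ℝ)) (u : E →L[ℝ] ℝ), WeakStarSeqTendsto un u →
      ∀ g : G, Tendsto (fun n => (A (un n) + B (un n) (un n)) g) atTop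
        (𝓝 ((A u + B u u) g)))
    (R : (E →L[ℝ] ℝ) → ℝ≥0∞)
    (hRlsc : ∀ (un : ℕ → (E →L[ℝ] ℝ)) (u : E →L[ℝ] ℝ), WeakStarSeqTendsto un u →
      R u ≤ liminf (fun n => R (un n)) atTop)
    (p : ℝ) (hp : 1 ≤ p) (α : ℝ) (gδ : G →L[ℝ] ℝ)
    (hcoercive : ∀ un : ℕ → (E →L[ℝ] ℝ),
      Tendsto (fun n => ‖un n‖) atTop atTop →
      Tendsto (fun n => ENNReal.ofReal (‖A (un n) + B (un n) (un n) - gδ‖ ^ p) +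
        ENNReal.ofReal α * R (un n)) atTop (𝓝 ⊤)) :
    ∃ uα : E →L[ℝ] ℝ, ∀ u : E →L[ℝ] ℝ,
      ENNReal.ofReal (‖A uα + B uα uα - gδ‖ ^ p) + ENNReal.ofReal α * R uα ≤
      ENNReal.ofReal (‖A u + B u u - gδ‖ ^ p) + ENNReal.ofReal α * R u := by
  set J : (E →L[ℝ] ℝ) → ℝ≥0∞ := fun u =>
    ENNReal.ofReal (‖A u + B u u - gδ‖ ^ p) + ENNReal.ofReal α * R u
  have hJ_le_liminf : ∀ un u, WeakStarSeqTendsto un u → J u ≤ liminf (fun n => J (un n)) atTop := by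
    intro un u hu
    have hresidual : WeakStarSeqTendsto (fun n => A (un n) + B (un n) (un n) - gδ)
        (A u + B u u - gδ) := fun g => (hK un u hu g).sub_const (gδ g)
    set fidelity := fun n => ENNReal.ofReal (‖A (un n) + B (un n) (un n) - gδ‖ ^ p)
    set penalty := fun n => ENNReal.ofReal α * R (un n)
    calc J u ≤ liminf fidelity atTop + liminf penalty atTop := by
          refine add_le_add (hresidual.ofReal_norm_rpow_le_liminf (zero_lt_one.trans_le hp)) ?_
          rw [ENNReal.liminf_const_mul_of_ne_top ENNReal.ofReal_ne_top]
          gcongr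
          exact hRlsc un u hu
      _ ≤ liminf (fidelity + penalty) atTop :=
          ENNReal.liminf_add_liminf_le_liminf_add fidelity penalty
  refine exists_forall_le_of_exists_subseq_le_liminf J fun x ⟨M, hM, hxM⟩ => ?_
  obtain ⟨C, hC⟩ := exists_norm_le_of_le_of_coercive J hcoercive hM
  obtain ⟨u, φ, hφ, hu⟩ := WeakStarSeqTendsto.exists_subseq_of_norm_le fun n => hC _ (hxM n)
  exact ⟨u, φ, hφ, hJ_le_liminf _ u hu⟩

/-- **Well-posedness of the dilinear Tikhonov regularization.**
Let `E`, `G` be real Banach spaces with `E` separable, `X := E*`, `Y := G*`.  Let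
`K u := A u + B u u` be a bounded dilinear map which is sequentially
weak-*-to-weak-* continuous, let `R : X → [0, ∞]` be proper and sequentially weak-*
lower semicontinuous, `p ≥ 1`, `α > 0`, `g^δ ∈ Y`, and suppose the Tikhonov functional
`J_α u = ‖K u − g^δ‖^p + α R u` is coercive.  Then `J_α` attains its minimum. -/
theorem dilinear_tikhonov_wellposed
    {E G : Type*} [NormedAddCommGroup E] [NormedSpace ℝ E] [CompleteSpace E]
    [TopologicalSpace.SeparableSpace E]
    [NormedAddCommGroup G] [NormedSpace ℝ G] [CompleteSpace G]
    (A : (E →L[ℝ] ℝ) →L[ℝ] (G →L[ℝ] ℝ))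
    (B : (E →L[ℝ] ℝ) →L[ℝ] (E →L[ℝ] ℝ) →L[ℝ] (G →L[ℝ] ℝ))
    (hBsymm : ∀ x y, B x y = B y x)
    (hK : ∀ (un : ℕ → (E →L[ℝ] ℝ)) (u : E →L[ℝ] ℝ), WeakStarSeqTendsto un u →
      ∀ g : G, Tendsto (fun n => (A (un n) + B (un n) (un n)) g) atTop
        (𝓝 ((A u + B u u) g)))
    (R : (E →L[ℝ] ℝ) → ℝ≥0∞) (hRproper : ∃ u, R u ≠ ⊤)
    (hRlsc : ∀ (un : ℕ → (E →L[ℝ] ℝ)) (u : E →L[ℝ] ℝ), WeakStarSeqTendsto un u →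
      R u ≤ liminf (fun n => R (un n)) atTop)
    (p : ℝ) (hp : 1 ≤ p) (α : ℝ) (hα : 0 < α) (gδ : G →L[ℝ] ℝ)
    (hcoercive : ∀ un : ℕ → (E →L[ℝ] ℝ),
      Tendsto (fun n => ‖un n‖) atTop atTop →
      Tendsto (fun n => ENNReal.ofReal (‖A (un n) + B (un n) (un n) - gδ‖ ^ p) +
        ENNReal.ofReal α * R (un n)) atTop (𝓝 ⊤)) :
    ∃ uα : E →L[ℝ] ℝ, ∀ u : E →L[ℝ] ℝ,
      ENNReal.ofReal (‖A uα + B uα uα - gδ‖ ^ p) + ENNReal.ofReal α * R uα ≤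
      ENNReal.ofReal (‖A u + B u u - gδ‖ ^ p) + ENNReal.ofReal α * R u :=
  dilinear_tikhonov_wellposed_general A B hK R hRlsc p hp α gδ hcoercive
end

section
/- Let X be a real normed space and Y a real Hilbert space. Let A : X → Y be a bounded linear map, B : X × X → Y a bounded symmetric bilinear map, and K(u) := A(u) + B(u, u). Let R : X → ℝ ∪ {+∞}, let δ ≥ 0, α > 0, and g†, g^δ ∈ Y with ‖g† − g^δ‖ ≤ δ. Let u† ∈ X satisfy K(u†) = g† and R(u†) < +∞, and assume the source condition: there exists ω ∈ Y such that R(v) ≥ R(u†) + ⟨ω, A(v − u†)⟩ + ⟨ω, B(v, v) − B(u†, u†)⟩ for all v ∈ X. Let u_α ∈ X be a minimizer of J_α(u) := ‖K(u) − g^δ‖² + α R(u), i.e. J_α(u_α) ≤ J_α(u) for all u ∈ X. Then R(u_α) < +∞, the dilinear Bregman distance Δ := R(u_α) − R(u†) − ⟨ω, A(u_α − u†)⟩ − ⟨ω, B(u_α, u_α) − B(u†, u†)⟩ satisfies Δ ≤ (δ/√α + (√α/2) ‖ω‖)², and the data fidelity satisfies ‖K(u_α) − g^δ‖ ≤ δ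 + α ‖ω‖. (Convergence rate under a source-wise representation.) -/
/-!
Write `K u = A u + B u u`. The source element `ω` linearises the dilinear part: the
correction term of the Bregman distance equals `⟪ω, K u_α − g†⟫`, which Cauchy–Schwarz and
the noise bound control by `‖ω‖ (‖K u_α − g^δ‖ + δ)`. Comparing `J_α(u_α)` with `J_α(u†)`
and inserting the source condition gives, with `r = ‖K u_α − g^δ‖` and `D` the Bregman
distance, `r² + α D ≤ δ² + α ‖ω‖ (r + δ)`. Since `D ≥ 0` this bounds `r`, and completing the
square in `r` bounds `D`.
-/

open Real

theorem EReal.ne_top_of_coe_add_mul_le {x z α b : ℝ} {y : EReal} (hα : 0 < α)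
    (h : (x : EReal) + α * y ≤ (z : EReal) + α * (b : EReal)) : y ≠ ⊤ := by
  rintro rfl
  rw [coe_mul_top_of_pos hα, add_top_of_ne_bot (coe_ne_bot x), top_le_iff, ← coe_mul,
    ← coe_add] at h
  exact coe_ne_top _ h

theorem inner_map_sub_add_inner_sub {X Y F : Type*} [AddCommGroup X] [Module ℝ X]
    [NormedAddCommGroup Y] [InnerProductSpace ℝ Y] [FunLike F X Y] [LinearMapClass F ℝ X Y]
    (A : F) (Q : X → Y) (ω : Y) (u v : X) :
    inner ℝ ω (A (v - u)) + inner ℝ ω (Q v - Q u) =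
      inner ℝ ω ((A v + Q v) - (A u + Q u)) := by
  rw [map_sub, ← inner_add_right]
  congr 1
  abel

theorem neg_inner_sub_le_norm_mul {Y : Type*} [NormedAddCommGroup Y] [InnerProductSpace ℝ Y]
    {ω y g g' : Y} {δ : ℝ} (hg : ‖g - g'‖ ≤ δ) :
    -inner ℝ ω (y - g) ≤ ‖ω‖ * (‖y - g'‖ + δ) := by
  have hyg : ‖y - g‖ ≤ ‖y - g'‖ + δ :=
    calc ‖y - g‖ ≤ ‖y - g'‖ + ‖g' - g‖ := norm_sub_le_norm_sub_add_norm_sub _ _ _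
      _ ≤ ‖y - g'‖ + δ := by rwa [norm_sub_rev g', add_le_add_iff_left]
  calc -inner ℝ ω (y - g) ≤ ‖ω‖ * ‖y - g‖ := (neg_le_abs _).trans (abs_real_inner_le_norm _ _)
    _ ≤ ‖ω‖ * (‖y - g'‖ + δ) := mul_le_mul_of_nonneg_left hyg (norm_nonneg _)

section TikhonovEstimate

variable {r δ α w D : ℝ}

theorem le_add_mul_of_sq_add_mul_le (hα : 0 ≤ α) (hδ : 0 ≤ δ) (hw : 0 ≤ w) (hD : 0 ≤ D)
    (h : r ^ 2 + α * D ≤ δ ^ 2 + α * w * (r + δ)) : r ≤ δ + α * w := by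
  nlinarith [mul_nonneg hα hD, mul_nonneg hα hw]

theorem le_sq_of_sq_add_mul_le (hα : 0 < α) (h : r ^ 2 + α * D ≤ δ ^ 2 + α * w * (r + δ)) :
    D ≤ (δ / √α + √α / 2 * w) ^ 2 := by
  have hsq : α * (δ / √α + √α / 2 * w) ^ 2 = δ ^ 2 + α * w * δ + (α * w / 2) ^ 2 := by
    have h0 : √α ≠ 0 := (sqrt_pos.mpr hα).ne'
    field_simp
    rw [sq_sqrt hα.le]
    ring
  refine le_of_mul_le_mul_left ?_ hα
  nlinarith [sq_nonneg (r - α * w / 2)]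

end TikhonovEstimate

theorem dilinear_convergence_rate_general
    {X Y : Type*} [NormedAddCommGroup X] [NormedSpace ℝ X]
    [NormedAddCommGroup Y] [InnerProductSpace ℝ Y]
    (A : X →L[ℝ] Y) (B : X →L[ℝ] X →L[ℝ] Y)
    (R : X → EReal) (hRbot : ∀ u : X, R u ≠ ⊥)
    (δ : ℝ) (α : ℝ) (hα : 0 < α)
    (gdag gδ : Y) (hnoise : ‖gdag - gδ‖ ≤ δ)
    (udag : X) (hsol : A udag + B udag udag = gdag) (hRfin : R udag ≠ ⊤)
    (ω : Y)
    (hsource : ∀ v : X,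
      R udag + (((inner ℝ ω (A (v - udag)) : ℝ) +
        (inner ℝ ω (B v v - B udag udag) : ℝ) : ℝ) : EReal) ≤ R v)
    (uα : X)
    (hmin : ∀ u : X,
      ((‖A uα + B uα uα - gδ‖ ^ 2 : ℝ) : EReal) + (α : EReal) * R uα ≤
      ((‖A u + B u u - gδ‖ ^ 2 : ℝ) : EReal) + (α : EReal) * R u) :
    R uα ≠ ⊤ ∧
    R uα - R udag - (((inner ℝ ω (A (uα - udag)) : ℝ) +
        (inner ℝ ω (B uα uα - B udag udag) : ℝ) : ℝ) : EReal) ≤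
      (((δ / Real.sqrt α + Real.sqrt α / 2 * ‖ω‖) ^ 2 : ℝ) : EReal) ∧
    ‖A uα + B uα uα - gδ‖ ≤ δ + α * ‖ω‖ := by
  obtain ⟨b, hb⟩ : ∃ b : ℝ, R udag = b := ⟨_, (EReal.coe_toReal hRfin (hRbot udag)).symm⟩
  have hmin_dag := hmin udag
  rw [hsol, hb] at hmin_dag
  have hRα : R uα ≠ ⊤ := EReal.ne_top_of_coe_add_mul_le hα hmin_dag
  obtain ⟨a, ha⟩ : ∃ a : ℝ, R uα = a := ⟨_, (EReal.coe_toReal hRα (hRbot uα)).symm⟩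
  refine ⟨hRα, ?_⟩
  have hsrc := hsource uα
  rw [ha, hb, inner_map_sub_add_inner_sub A (fun u ↦ B u u), hsol] at hsrc ⊢
  rw [ha] at hmin_dag
  norm_cast at hmin_dag hsrc ⊢
  have hδ : 0 ≤ δ := (norm_nonneg _).trans hnoise
  have hcs := neg_inner_sub_le_norm_mul (ω := ω) (y := A uα + B uα uα) hnoise
  have hkey : ‖A uα + B uα uα - gδ‖ ^ 2 + α * (a - b - inner ℝ ω (A uα + B uα uα - gdag)) ≤
      δ ^ 2 + α * ‖ω‖ * (‖A uα + B uα uα - gδ‖ + δ) := by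
    nlinarith [mul_le_mul_of_nonneg_left hcs hα.le, pow_le_pow_left₀ (norm_nonneg _) hnoise 2]
  exact ⟨le_sq_of_sq_add_mul_le hα hkey,
    le_add_mul_of_sq_add_mul_le hα.le hδ (norm_nonneg _) (by linarith) hkey⟩

/-- **Convergence rate under a source-wise representation.**
Let `K u = A u + B u u` be a bounded dilinear map from a real normed space `X` into a
real Hilbert space `Y`, `R : X → ℝ ∪ {+∞}`, `‖g† − g^δ‖ ≤ δ`, `K u† = g†` with
`R u†` finite, and assume the source condition
`R v ≥ R u† + ⟨ω, A (v − u†)⟩ + ⟨ω, B v v − B u† u†⟩` for some `ω ∈ Y`.  If `u_α`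
minimizes `J_α u = ‖K u − g^δ‖² + α R u`, then `R u_α < ∞`, the dilinear Bregman
distance satisfies `Δ ≤ (δ/√α + (√α/2)‖ω‖)²`, and `‖K u_α − g^δ‖ ≤ δ + α ‖ω‖`. -/
theorem dilinear_convergence_rate
    {X Y : Type*} [NormedAddCommGroup X] [NormedSpace ℝ X]
    [NormedAddCommGroup Y] [InnerProductSpace ℝ Y] [CompleteSpace Y]
    (A : X →L[ℝ] Y) (B : X →L[ℝ] X →L[ℝ] Y) (hBsymm : ∀ a b : X, B a b = B b a)
    (R : X → EReal) (hRbot : ∀ u : X, R u ≠ ⊥)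
    (δ : ℝ) (hδ : 0 ≤ δ) (α : ℝ) (hα : 0 < α)
    (gdag gδ : Y) (hnoise : ‖gdag - gδ‖ ≤ δ)
    (udag : X) (hsol : A udag + B udag udag = gdag) (hRfin : R udag ≠ ⊤)
    (ω : Y)
    (hsource : ∀ v : X,
      R udag + (((inner ℝ ω (A (v - udag)) : ℝ) +
        (inner ℝ ω (B v v - B udag udag) : ℝ) : ℝ) : EReal) ≤ R v)
    (uα : X)
    (hmin : ∀ u : X,
      ((‖A uα + B uα uα - gδ‖ ^ 2 : ℝ) : EReal) + (α : EReal) * R uα ≤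
      ((‖A u + B u u - gδ‖ ^ 2 : ℝ) : EReal) + (α : EReal) * R u) :
    R uα ≠ ⊤ ∧
    R uα - R udag - (((inner ℝ ω (A (uα - udag)) : ℝ) +
        (inner ℝ ω (B uα uα - B udag udag) : ℝ) : ℝ) : EReal) ≤
      (((δ / Real.sqrt α + Real.sqrt α / 2 * ‖ω‖) ^ 2 : ℝ) : EReal) ∧
    ‖A uα + B uα uα - gδ‖ ≤ δ + α * ‖ω‖ :=
  dilinear_convergence_rate_general A B R hRbot δ α hα gdag gδ hnoise udag hsol hRfin ω hsource uα
    hmin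
end

section
/- Let u, v ∈ L²(ℝ, ℂ) vanish almost everywhere outside the interval [0, 1]. If their autoconvolutions agree, i.e. ∫_ℝ u(s) u(t − s) ds = ∫_ℝ v(s) v(t − s) ds for almost every t ∈ ℝ, then u = v almost everywhere or u = −v almost everywhere. (Uniqueness of deautoconvolution up to global sign.) -/
/-!
Taking Fourier transforms turns the autoconvolution into a square, so `(𝓕 u)² = (𝓕 v)²` on `ℝ`,
i.e. `(𝓕 u - 𝓕 v) * (𝓕 u + 𝓕 v) = 0`. Because `u` and `v` have compact support, their Fourier
transforms extend to entire functions (the Fourier–Laplace transforms), so both factors are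
real-analytic on the connected line, and one of them vanishes identically. Injectivity of the
Fourier transform on `L¹` then gives `u = v` or `u = -v` almost everywhere.
-/

open MeasureTheory Complex FourierTransform Set

theorem MeasureTheory.MemLp.integrable_of_ae_notMem_eq_zero {α E : Type*} [MeasurableSpace α]
    {μ : Measure α} [NormedAddCommGroup E] {p : ENNReal} {f : α → E} {s : Set α}
    (hf : MemLp f p μ) (hp : 1 ≤ p) (hs : μ s ≠ ⊤) (hf_supp : ∀ᵐ x ∂μ, x ∉ s → f x = 0) :
    Integrable f μ :=
  have := isFiniteMeasure_restrict.2 hs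
  IntegrableOn.integrable_of_ae_notMem_eq_zero ((hf.restrict s).integrable hp) hf_supp

section FourierInjective

variable {V : Type*} [NormedAddCommGroup V] [InnerProductSpace ℝ V] [FiniteDimensional ℝ V]
  [MeasurableSpace V] [BorelSpace V]

theorem Real.fourier_neg {E : Type*} [NormedAddCommGroup E] [NormedSpace ℂ E] (f : V → E) :
    𝓕 (-f) = -𝓕 f := by
  ext ξ
  simp only [Real.fourier_eq, Pi.neg_apply, smul_neg, integral_neg]

theorem Real.integral_fourier_mul_eq {f g : V → ℂ} (hf : Integrable f) (hg : Integrable g) :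
    ∫ ξ, 𝓕 f ξ * g ξ = ∫ x, f x * 𝓕 g x := by
  have hflip : (innerₗ V).flip = innerₗ V :=
    LinearMap.ext fun x => LinearMap.ext fun y => real_inner_comm x y
  have := VectorFourier.integral_bilin_fourierIntegral_eq_flip (ContinuousLinearMap.mul ℂ ℂ)
    (L := innerₗ V) Real.continuous_fourierChar continuous_inner hf hg
  simp only [hflip, ContinuousLinearMap.mul_apply'] at this
  exact this

/-- Every smooth compactly supported test function is the Fourier transform of a Schwartz function,
so `𝓕 f` determines all the integrals `∫ φ • f`. -/
theorem MeasureTheory.Integrable.ae_eq_of_fourier_eq {f g : V → ℂ} (hf : Integrable f)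
    (hg : Integrable g) (h : 𝓕 f = 𝓕 g) : f =ᵐ[volume] g := by
  refine ae_eq_of_integral_contDiff_smul_eq hf.locallyIntegrable hg.locallyIntegrable
    fun φ hφ hφ_supp => ?_
  let ψ : SchwartzMap V ℂ :=
    𝓕⁻ ((hφ_supp.comp_left ofReal_zero).toSchwartzMap (ofRealCLM.contDiff.comp hφ))
  have hψ (x : V) : 𝓕 (ψ : V → ℂ) x = φ x := by
    rw [← SchwartzMap.fourier_coe, FourierTransform.fourier_fourierInv_eq]
    rfl
  simp only [real_smul, ← hψ, mul_comm _ (f _), mul_comm _ (g _),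
    ← Real.integral_fourier_mul_eq hf ψ.integrable, ← Real.integral_fourier_mul_eq hg ψ.integrable,
    h]

end FourierInjective

noncomputable def fourierLaplace (u : ℝ → ℂ) (z : ℂ) : ℂ :=
  ∫ s : ℝ, cexp (-2 * Real.pi * I * s * z) * u s

theorem fourierLaplace_ofReal (u : ℝ → ℂ) (ξ : ℝ) : fourierLaplace u ξ = 𝓕 u ξ := by
  rw [Real.fourier_real_eq_integral_exp_smul, fourierLaplace]
  congr 1 with s
  rw [smul_eq_mul]
  push_cast
  ring_nf

theorem norm_cexp_neg_two_pi_I_mul_le {s R r : ℝ} (hs : |s| ≤ R) {z : ℂ} (hz : ‖z‖ ≤ r) :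
    ‖cexp (-2 * Real.pi * I * s * z)‖ ≤ Real.exp (2 * Real.pi * R * r) := by
  refine (norm_exp_le_exp_norm _).trans (Real.exp_le_exp.2 ?_)
  simp only [norm_mul, norm_neg, Complex.norm_ofNat, norm_real, Real.norm_eq_abs, norm_I,
    mul_one, abs_of_pos Real.pi_pos]
  have : 0 ≤ R := (abs_nonneg s).trans hs
  gcongr

section CompactSupport

variable {u : ℝ → ℂ} {K : Set ℝ}

theorem differentiable_fourierLaplace (hu : Integrable u) (hK : IsCompact K)
    (hu_supp : ∀ᵐ s, s ∉ K → u s = 0) : Differentiable ℂ (fourierLaplace u) := by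
  intro z₀
  obtain ⟨R, hKR⟩ := hK.isBounded.subset_closedBall 0
  have hsupp : ∀ᵐ s, u s ≠ 0 → |s| ≤ R := by
    filter_upwards [hu_supp] with s hs h
    simpa using hKR (not_not.1 (mt hs h))
  set C := Real.exp (2 * Real.pi * R * (‖z₀‖ + 1))
  have hmeas (z : ℂ) : AEStronglyMeasurable fun s : ℝ => cexp (-2 * Real.pi * I * s * z) * u s :=
    (by fun_prop : Continuous fun s : ℝ => cexp (-2 * Real.pi * I * s * z)).aestronglyMeasurable.mul
      hu.1
  -- On `ball z₀ 1` and on the support `|s| ≤ R`, the exponential factor is at most `C`.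
  refine (hasDerivAt_integral_of_dominated_loc_of_deriv_le
    (F' := fun z s => -2 * Real.pi * I * s * (cexp (-2 * Real.pi * I * s * z) * u s))
    (bound := fun s => 2 * Real.pi * R * (C * ‖u s‖))
    (Metric.ball_mem_nhds z₀ one_pos) (.of_forall hmeas) ?_ ?_ ?_ ?_ ?_).2.differentiableAt
  · refine (hu.norm.const_mul C).mono' (hmeas z₀) ?_
    filter_upwards [hsupp] with s hs
    rcases eq_or_ne (u s) 0 with h | h
    · simp [h]
    rw [norm_mul]
    gcongr
    exact norm_cexp_neg_two_pi_I_mul_le (hs h) (by linarith)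
  · exact (by fun_prop : Continuous fun s : ℝ => -2 * Real.pi * I * s).aestronglyMeasurable.mul
      (hmeas z₀)
  · filter_upwards [hsupp] with s hs z hz
    rcases eq_or_ne (u s) 0 with h | h
    · simp [h]
    have hsR := hs h
    have hR : 0 ≤ R := (abs_nonneg s).trans hsR
    simp only [norm_mul, norm_neg, Complex.norm_ofNat, norm_real, Real.norm_eq_abs, norm_I,
      mul_one, abs_of_pos Real.pi_pos]
    gcongr
    exact norm_cexp_neg_two_pi_I_mul_le hsR (norm_lt_of_mem_ball hz).le
  · exact (hu.norm.const_mul C).const_mul _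
  · refine .of_forall fun s z _ => ?_
    exact (((hasDerivAt_id z).const_mul (-2 * Real.pi * I * s)).cexp.mul_const (u s)).congr_deriv
      (by simp only [id]; ring)

theorem analyticOnNhd_fourier_of_isCompact (hu : Integrable u) (hK : IsCompact K)
    (hu_supp : ∀ᵐ s, s ∉ K → u s = 0) : AnalyticOnNhd ℝ (𝓕 u) univ := by
  have h𝓕 : 𝓕 u = fourierLaplace u ∘ ofRealCLM := funext fun ξ => (fourierLaplace_ofReal u ξ).symm
  intro ξ _
  rw [h𝓕]
  exact ((differentiable_fourierLaplace hu hK hu_supp).analyticAt _).restrictScalars.comp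
    (ofRealCLM.analyticAt ξ)

end CompactSupport

/-- **Uniqueness of deautoconvolution up to global sign.**
If `u, v ∈ L²(ℝ, ℂ)` vanish a.e. outside `[0, 1]` and their autoconvolutions agree
almost everywhere, then `u = v` a.e. or `u = −v` a.e. -/
theorem deautoconvolution_unique_up_to_sign
    (u v : ℝ → ℂ)
    (hu : MemLp u 2 volume) (hv : MemLp v 2 volume)
    (husupp : ∀ᵐ t ∂volume, t ∉ Set.Icc (0 : ℝ) 1 → u t = 0)
    (hvsupp : ∀ᵐ t ∂volume, t ∉ Set.Icc (0 : ℝ) 1 → v t = 0)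
    (hconv : ∀ᵐ t ∂volume,
      (∫ s, u s * u (t - s) ∂volume) = ∫ s, v s * v (t - s) ∂volume) :
    u =ᵐ[volume] v ∨ u =ᵐ[volume] (-v) := by
  have hu₁ := hu.integrable_of_ae_notMem_eq_zero one_le_two measure_Icc_lt_top.ne husupp
  have hv₁ := hv.integrable_of_ae_notMem_eq_zero one_le_two measure_Icc_lt_top.ne hvsupp
  have hsq (ξ : ℝ) : 𝓕 u ξ * 𝓕 u ξ = 𝓕 v ξ * 𝓕 v ξ := by
    rw [← Real.fourier_mul_convolution_eq hu₁ hu₁, ← Real.fourier_mul_convolution_eq hv₁ hv₁]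
    exact Real.fourier_congr_ae hconv ξ
  have hu_an := analyticOnNhd_fourier_of_isCompact hu₁ isCompact_Icc husupp
  have hv_an := analyticOnNhd_fourier_of_isCompact hv₁ isCompact_Icc hvsupp
  rcases (hu_an.sub hv_an).eq_zero_or_eq_zero_of_mul_eq_zero (hu_an.add hv_an)
      (fun ξ _ => by simp only [Pi.sub_apply, Pi.add_apply]; linear_combination hsq ξ)
      isPreconnected_univ with h | h
  · exact .inl <| hu₁.ae_eq_of_fourier_eq hv₁ <| funext fun ξ => sub_eq_zero.1 (h ξ trivial)
  · refine .inr <| hu₁.ae_eq_of_fourier_eq hv₁.neg <| funext fun ξ => ?_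
    rw [Real.fourier_neg]
    exact eq_neg_of_add_eq_zero_left (h ξ trivial)
end

section
/- Let k : ℝ × ℝ → ℂ be measurable with |k(s, t)| ≤ C for almost every (s, t) and some constant C ≥ 0, and let u, v ∈ L²(ℝ, ℂ) vanish almost everywhere outside [0, 1]. Then the function B(t) := ∫_ℝ k(s, t) u(s) v(t − s) ds is defined for almost every t, belongs to L²(ℝ, ℂ), and satisfies ‖B‖_{L²} ≤ C ‖u‖_{L²} ‖v‖_{L²}. (Boundedness of the kernel-based bilinear convolution operator.) -/
/-!
The kernel is bounded by `C`, so `|B(t)| ≤ C (|u| ⋆ |v|)(t)` and everything reduces to Young's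
inequality `‖f ⋆ g‖_p ≤ ‖f‖₁ ‖g‖_p` for nonnegative functions, which follows pointwise from
Hölder's inequality `(∫ f h)^p ≤ (∫ f)^(p-1) ∫ f h^p` and Tonelli. Being in `L^p`, `|u| ⋆ |v|` is
finite a.e., which makes the integrand integrable for a.e. `t`. Since `u` lives on `[0, 1]`,
which has measure one, `‖u‖₁ ≤ ‖u‖₂`.
-/

open MeasureTheory
open scoped ENNReal

theorem ENNReal.rpow_lintegral_mul_le {α : Type*} [MeasurableSpace α] {ν : Measure α}
    {f h : α → ℝ≥0∞} (hf : AEMeasurable f ν) (hh : AEMeasurable h ν) {p : ℝ} (hp : 1 ≤ p) :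
    (∫⁻ a, f a * h a ∂ν) ^ p ≤ (∫⁻ a, f a ∂ν) ^ (p - 1) * ∫⁻ a, f a * h a ^ p ∂ν := by
  have hp0 : 0 < p := by linarith
  have hq : 0 ≤ 1 / p := by positivity
  have hq' : 0 ≤ 1 - 1 / p := by rw [sub_nonneg, div_le_one hp0]; exact hp
  have hsplit : ∀ a, f a * h a = f a ^ (1 - 1 / p) * (f a * h a ^ p) ^ (1 / p) := fun a => by
    rw [ENNReal.mul_rpow_of_nonneg _ _ hq, ← ENNReal.rpow_mul, mul_one_div_cancel hp0.ne',
      ENNReal.rpow_one, ← mul_assoc, ← ENNReal.rpow_add_of_nonneg _ _ hq' hq, sub_add_cancel,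
      ENNReal.rpow_one]
  calc (∫⁻ a, f a * h a ∂ν) ^ p
      ≤ ((∫⁻ a, f a ∂ν) ^ (1 - 1 / p) * (∫⁻ a, f a * h a ^ p ∂ν) ^ (1 / p)) ^ p := by
        simp_rw [hsplit]
        gcongr
        exact ENNReal.lintegral_mul_norm_pow_le hf (hf.mul (hh.pow_const p)) hq' hq (by ring)
    _ = (∫⁻ a, f a ∂ν) ^ (p - 1) * ∫⁻ a, f a * h a ^ p ∂ν := by
        rw [ENNReal.mul_rpow_of_nonneg _ _ hp0.le, ← ENNReal.rpow_mul, ← ENNReal.rpow_mul,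
          one_div_mul_cancel hp0.ne', ENNReal.rpow_one, sub_mul, one_mul,
          one_div_mul_cancel hp0.ne']

namespace MeasureTheory

theorem eLpNorm_le_eLpNorm_of_ae_eq_zero_outside {α E : Type*} [MeasurableSpace α]
    {μ : Measure α} [NormedAddCommGroup E] {f : α → E} {s : Set α} {p q : ℝ≥0∞}
    (hs : MeasurableSet s) (hμs : μ s ≤ 1) (hpq : p ≤ q) (hf : AEStronglyMeasurable f μ)
    (hfs : ∀ᵐ x ∂μ, x ∉ s → f x = 0) :
    eLpNorm f p μ ≤ eLpNorm f q μ := by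
  rcases eq_or_ne p 0 with rfl | hp0
  · simp
  have hexp : 0 ≤ 1 / p.toReal - 1 / q.toReal := by
    rcases eq_or_ne q ⊤ with rfl | hq
    · simp
    exact sub_nonneg.2 (one_div_le_one_div_of_le
      (ENNReal.toReal_pos hp0 (hpq.trans_lt hq.lt_top).ne) (ENNReal.toReal_mono hq hpq))
  have hf_ind : f =ᵐ[μ] s.indicator f := by
    filter_upwards [hfs] with x hx
    by_cases hxs : x ∈ s
    · rw [Set.indicator_of_mem hxs]
    · rw [Set.indicator_of_notMem hxs, hx hxs]
  rw [eLpNorm_congr_ae hf_ind, eLpNorm_congr_ae hf_ind,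
    eLpNorm_indicator_eq_eLpNorm_restrict hs, eLpNorm_indicator_eq_eLpNorm_restrict hs]
  refine (eLpNorm_le_eLpNorm_mul_rpow_measure_univ hpq hf.restrict).trans
    (mul_le_of_le_one_right' (ENNReal.rpow_le_one ?_ hexp))
  rwa [Measure.restrict_apply_univ]

theorem MemLp.ae_enorm_lt_top {α ε : Type*} [MeasurableSpace α] {μ : Measure α}
    [TopologicalSpace ε] [ContinuousENorm ε] {f : α → ε} {p : ℝ≥0∞}
    (hf : MemLp f p μ) (hp0 : p ≠ 0) : ∀ᵐ x ∂μ, ‖f x‖ₑ < ⊤ := by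
  rcases eq_or_ne p ⊤ with rfl | hp
  · filter_upwards [ae_le_eLpNormEssSup (f := f) (μ := μ)] with x hx
    exact hx.trans_lt (by simpa using hf.2)
  have hint := lintegral_rpow_enorm_lt_top_of_eLpNorm_lt_top hp0 hp hf.2
  filter_upwards [ae_lt_top' (hf.1.enorm.pow_const _) hint.ne] with x hx
  exact (ENNReal.rpow_lt_top_iff_of_pos (ENNReal.toReal_pos hp0 hp)).1 hx

section Young

variable {G : Type*} [MeasurableSpace G] [AddGroup G] [MeasurableAdd₂ G] [MeasurableNeg G]
  {μ : Measure G} [SFinite μ] [μ.IsAddLeftInvariant] {f g : G → ℝ≥0∞}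

theorem lintegral_lconvolution_rpow_le (hf : AEMeasurable f μ) (hg : AEMeasurable g μ)
    {p : ℝ} (hp : 1 ≤ p) :
    ∫⁻ x, (f ⋆ₗ[μ] g) x ^ p ∂μ ≤ (∫⁻ y, f y ∂μ) ^ p * ∫⁻ x, g x ^ p ∂μ := by
  have hF : AEMeasurable (fun q : G × G => f q.2 * g (-q.2 + q.1) ^ p) (μ.prod μ) :=
    (hf.comp_quasiMeasurePreserving Measure.quasiMeasurePreserving_snd).mul
      ((hg.comp_quasiMeasurePreserving (quasiMeasurePreserving_neg_add_swap μ μ)).pow_const p)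
  calc ∫⁻ x, (f ⋆ₗ[μ] g) x ^ p ∂μ
      ≤ ∫⁻ x, (∫⁻ y, f y ∂μ) ^ (p - 1) * ∫⁻ y, f y * g (-y + x) ^ p ∂μ ∂μ :=
        lintegral_mono fun x => ENNReal.rpow_lintegral_mul_le hf
          (hg.comp_quasiMeasurePreserving
            ((quasiMeasurePreserving_add_right μ x).comp (quasiMeasurePreserving_neg μ))) hp
    _ = (∫⁻ y, f y ∂μ) ^ (p - 1) * ∫⁻ y, f y * ∫⁻ x, g (-y + x) ^ p ∂μ ∂μ := by
        rw [lintegral_const_mul'' _ hF.lintegral_prod_right', lintegral_lintegral_swap hF]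
        congr 1
        refine lintegral_congr fun y => ?_
        dsimp only
        refine lintegral_const_mul'' _ ?_
        exact (hg.comp_quasiMeasurePreserving
          (measurePreserving_add_left μ (-y)).quasiMeasurePreserving).pow_const p
    _ = (∫⁻ y, f y ∂μ) ^ p * ∫⁻ x, g x ^ p ∂μ := by
        simp_rw [lintegral_add_left_eq_self (fun x => g x ^ p)]
        rw [lintegral_mul_const'' _ hf, ← mul_assoc]
        congr 1
        have := ENNReal.rpow_add_of_nonneg (x := ∫⁻ y, f y ∂μ) _ _ (sub_nonneg.2 hp) zero_le_one
        rwa [sub_add_cancel, ENNReal.rpow_one, eq_comm] at this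

theorem eLpNorm_lconvolution_le (hf : AEMeasurable f μ) (hg : AEMeasurable g μ) {p : ℝ≥0∞}
    (hp : 1 ≤ p) (hp_top : p ≠ ⊤) :
    eLpNorm (f ⋆ₗ[μ] g) p μ ≤ eLpNorm f 1 μ * eLpNorm g p μ := by
  have hp0 : p ≠ 0 := (zero_lt_one.trans_le hp).ne'
  have hp_real : 0 < p.toReal := ENNReal.toReal_pos hp0 hp_top
  simp only [eLpNorm_one_eq_lintegral_enorm, eLpNorm_eq_lintegral_rpow_enorm_toReal hp0 hp_top,
    enorm_eq_self]
  calc (∫⁻ x, (f ⋆ₗ[μ] g) x ^ p.toReal ∂μ) ^ (1 / p.toReal)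
      ≤ ((∫⁻ y, f y ∂μ) ^ p.toReal * ∫⁻ x, g x ^ p.toReal ∂μ) ^ (1 / p.toReal) := by
        gcongr
        exact lintegral_lconvolution_rpow_le hf hg (by simpa using ENNReal.toReal_mono hp_top hp)
    _ = (∫⁻ y, f y ∂μ) * (∫⁻ x, g x ^ p.toReal ∂μ) ^ (1 / p.toReal) := by
        rw [ENNReal.mul_rpow_of_nonneg _ _ (by positivity), ← ENNReal.rpow_mul,
          mul_one_div_cancel hp_real.ne', ENNReal.rpow_one]

end Young

section KernelBilinear

variable {G : Type*} [MeasurableSpace G] [AddCommGroup G] {𝕜 : Type*} [RCLike 𝕜]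
  {k : G × G → 𝕜} {u v : G → 𝕜}

noncomputable def kernelBilinear (μ : Measure G) (k : G × G → 𝕜) (u v : G → 𝕜) (t : G) : 𝕜 :=
  ∫ s, k (s, t) * u s * v (t - s) ∂μ

variable {μ : Measure G} [SFinite μ]

theorem ae_lintegral_enorm_kernel_integrand_le {C : ℝ} (hkC : ∀ᵐ q ∂(μ.prod μ), ‖k q‖ ≤ C) :
    ∀ᵐ t ∂μ, ∫⁻ s, ‖k (s, t) * u s * v (t - s)‖ₑ ∂μ ≤
      ENNReal.ofReal C * ((fun s => ‖u s‖ₑ) ⋆ₗ[μ] fun s => ‖v s‖ₑ) t := by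
  have hkC' : ∀ᵐ t ∂μ, ∀ᵐ s ∂μ, ‖k (s, t)‖ ≤ C :=
    Measure.ae_ae_of_ae_prod (Measure.measurePreserving_swap.quasiMeasurePreserving.ae hkC)
  filter_upwards [hkC'] with t ht
  rw [lconvolution_def, ← lintegral_const_mul' _ _ ENNReal.ofReal_ne_top]
  refine lintegral_mono_ae ?_
  filter_upwards [ht] with s hs
  rw [enorm_mul, enorm_mul, neg_add_eq_sub, mul_assoc, ← ofReal_norm]
  gcongr

variable [MeasurableAdd₂ G] [MeasurableNeg G] [μ.IsAddLeftInvariant]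

theorem aestronglyMeasurable_kernel_integrand (hk : AEStronglyMeasurable k (μ.prod μ))
    (hu : AEStronglyMeasurable u μ) (hv : AEStronglyMeasurable v μ) :
    AEStronglyMeasurable (fun q : G × G => k (q.2, q.1) * u q.2 * v (q.1 - q.2)) (μ.prod μ) :=
  (hk.prod_swap.mul (hu.comp_quasiMeasurePreserving Measure.quasiMeasurePreserving_snd)).mul
    (hv.comp_quasiMeasurePreserving (quasiMeasurePreserving_sub μ μ))

theorem ae_integrable_memLp_eLpNorm_kernelBilinear_le {C : ℝ} {p : ℝ≥0∞}
    (hk : AEStronglyMeasurable k (μ.prod μ)) (hkC : ∀ᵐ q ∂(μ.prod μ), ‖k q‖ ≤ C)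
    (hu : MemLp u 1 μ) (hv : MemLp v p μ) (hp : 1 ≤ p) (hp_top : p ≠ ⊤) :
    (∀ᵐ t ∂μ, Integrable (fun s => k (s, t) * u s * v (t - s)) μ) ∧
    MemLp (kernelBilinear μ k u v) p μ ∧
    eLpNorm (kernelBilinear μ k u v) p μ ≤ ENNReal.ofReal C * eLpNorm u 1 μ * eLpNorm v p μ := by
  set Φ := (fun s => ‖u s‖ₑ) ⋆ₗ[μ] fun s => ‖v s‖ₑ
  have hΦ_le : eLpNorm Φ p μ ≤ eLpNorm u 1 μ * eLpNorm v p μ := by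
    simpa only [eLpNorm_enorm] using eLpNorm_lconvolution_le hu.1.enorm hv.1.enorm hp hp_top
  have hΦ : MemLp Φ p μ :=
    ⟨(aemeasurable_lconvolution hu.1.enorm hv.1.enorm).aestronglyMeasurable,
      hΦ_le.trans_lt (ENNReal.mul_lt_top hu.2 hv.2)⟩
  have hF := aestronglyMeasurable_kernel_integrand hk hu.1 hv.1
  have hdom := ae_lintegral_enorm_kernel_integrand_le (u := u) (v := v) hkC
  have hB_le : eLpNorm (kernelBilinear μ k u v) p μ ≤
      ENNReal.ofReal C * eLpNorm u 1 μ * eLpNorm v p μ := by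
    rw [mul_assoc]
    calc eLpNorm (kernelBilinear μ k u v) p μ ≤ C.toNNReal • eLpNorm Φ p μ := by
          refine eLpNorm_le_nnreal_smul_eLpNorm_of_ae_le_mul' ?_ p
          filter_upwards [hdom] with t ht
          exact (enorm_integral_le_lintegral_enorm _).trans ht
      _ ≤ ENNReal.ofReal C * (eLpNorm u 1 μ * eLpNorm v p μ) := by
          rw [ENNReal.smul_def, smul_eq_mul]
          exact mul_le_mul_right hΦ_le _
  refine ⟨?_, ⟨hF.integral_prod_right', hB_le.trans_lt ?_⟩, hB_le⟩
  · filter_upwards [hdom, hF.prodMk_left, hΦ.ae_enorm_lt_top (zero_lt_one.trans_le hp).ne']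
      with t ht hmeas hfin
    exact ⟨hmeas, ht.trans_lt (ENNReal.mul_lt_top ENNReal.ofReal_lt_top hfin)⟩
  · exact ENNReal.mul_lt_top (ENNReal.mul_lt_top ENNReal.ofReal_lt_top hu.2) hv.2

end KernelBilinear

end MeasureTheory

theorem kernel_bilinear_convolution_bounded_general
    (k : ℝ × ℝ → ℂ) (hk : Measurable k)
    (C : ℝ) (hkbdd : ∀ᵐ p : ℝ × ℝ ∂volume, ‖k p‖ ≤ C)
    (u v : ℝ → ℂ)
    (hu : MemLp u 2 volume) (hv : MemLp v 2 volume)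
    (husupp : ∀ᵐ t ∂volume, t ∉ Set.Icc (0 : ℝ) 1 → u t = 0) :
    (∀ᵐ t ∂volume, Integrable (fun s => k (s, t) * u s * v (t - s)) volume) ∧
    MemLp (fun t => ∫ s, k (s, t) * u s * v (t - s) ∂volume) 2 volume ∧
    eLpNorm (fun t => ∫ s, k (s, t) * u s * v (t - s) ∂volume) 2 volume ≤
      ENNReal.ofReal C * eLpNorm u 2 volume * eLpNorm v 2 volume := by
  have hu_one : eLpNorm u 1 volume ≤ eLpNorm u 2 volume :=
    eLpNorm_le_eLpNorm_of_ae_eq_zero_outside measurableSet_Icc (by simp [Real.volume_Icc])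
      (by norm_num) hu.1 husupp
  obtain ⟨hint, hmem, hle⟩ := ae_integrable_memLp_eLpNorm_kernelBilinear_le (μ := volume)
    hk.aestronglyMeasurable hkbdd ⟨hu.1, hu_one.trans_lt hu.2⟩ hv (by norm_num) (by norm_num)
  exact ⟨hint, hmem, hle.trans (by gcongr)⟩

/-- **Boundedness of the kernel-based bilinear convolution operator.**
Let `k : ℝ × ℝ → ℂ` be measurable with `‖k‖ ≤ C` a.e., and let `u, v ∈ L²(ℝ, ℂ)`
vanish a.e. outside `[0, 1]`.  Then `B t := ∫ k (s, t) u s v (t − s) ds` is defined for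
a.e. `t`, belongs to `L²(ℝ, ℂ)`, and `‖B‖_{L²} ≤ C ‖u‖_{L²} ‖v‖_{L²}`. -/
theorem kernel_bilinear_convolution_bounded
    (k : ℝ × ℝ → ℂ) (hk : Measurable k)
    (C : ℝ) (hC : 0 ≤ C) (hkbdd : ∀ᵐ p : ℝ × ℝ ∂volume, ‖k p‖ ≤ C)
    (u v : ℝ → ℂ)
    (hu : MemLp u 2 volume) (hv : MemLp v 2 volume)
    (husupp : ∀ᵐ t ∂volume, t ∉ Set.Icc (0 : ℝ) 1 → u t = 0)
    (hvsupp : ∀ᵐ t ∂volume, t ∉ Set.Icc (0 : ℝ) 1 → v t = 0) :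
    (∀ᵐ t ∂volume, Integrable (fun s => k (s, t) * u s * v (t - s)) volume) ∧
    MemLp (fun t => ∫ s, k (s, t) * u s * v (t - s) ∂volume) 2 volume ∧
    eLpNorm (fun t => ∫ s, k (s, t) * u s * v (t - s) ∂volume) 2 volume ≤
      ENNReal.ofReal C * eLpNorm u 2 volume * eLpNorm v 2 volume :=
  kernel_bilinear_convolution_bounded_general k hk C hkbdd u v hu hv husupp
end

section
/- Let k : ℝ × ℝ → ℂ be measurable and essentially bounded with k(s, t) = 0 for almost every (s, t) outside the set {(s, t) : 0 ≤ s ≤ 1 and s ≤ t ≤ s + 1}. Let w ∈ L²(ℝ², ℂ) vanish almost everywhere outside [0, 1] × [0, 1], and let φ ∈ L²(ℝ, ℂ) vanish almost everywhere outside [0, 2]. Then ∫_ℝ ( ∫_ℝ k(s, t) w(s, t − s) ds ) · conj(φ(t)) dt = ∫_ℝ ∫_ℝ w(s, t) · k(s, s + t) · conj(φ(s + t)) ds dt; i.e. the adjoint of the integral operator 𝒢_k[w](t) = ∫ k(s, t) w(s, t − s) ds with respect to the L² inner products is given by 𝒢_k*[φ](s, t) = conj(k(s, s + t)) φ(s +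 t). -/
/-!
Substituting `t ↦ s + t` in the inner variable turns the left side into the right side; this is
Fubini combined with invariance of Lebesgue measure under the shear `(s, t) ↦ (s, s + t)`. The
integrand is integrable by Cauchy–Schwarz: `w ∈ L²`, and `(s, t) ↦ k (s, t) · conj (φ t)` is in
`L²(ℝ²)` because `k` is bounded and vanishes for `s ∉ [0, 1]`.
-/

open MeasureTheory

open scoped ENNReal

namespace MeasureTheory

variable {α β 𝕜 : Type*} [MeasurableSpace α] [MeasurableSpace β] [RCLike 𝕜]
  {μ : Measure α} {ν : Measure β} {p : ℝ≥0∞}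

theorem MemLp.mul_prod (hp₀ : p ≠ 0) (hp : p ≠ ∞) {f : α → 𝕜} {g : β → 𝕜}
    (hf : MemLp f p μ) (hg : MemLp g p ν) :
    MemLp (fun z : α × β => f z.1 * g z.2) p (μ.prod ν) := by
  have hm : AEStronglyMeasurable (fun z : α × β => f z.1 * g z.2) (μ.prod ν) :=
    hf.1.comp_fst.mul hg.1.comp_snd
  rw [← integrable_norm_rpow_iff hm hp₀ hp]
  simp_rw [norm_mul, Real.mul_rpow (norm_nonneg _) (norm_nonneg _)]
  exact ((integrable_norm_rpow_iff hf.1 hp₀ hp).2 hf).mul_prod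
    ((integrable_norm_rpow_iff hg.1 hp₀ hp).2 hg)

theorem MemLp.mul_comp_snd_of_bdd (hp₀ : p ≠ 0) (hp : p ≠ ∞) {k : α × β → 𝕜} {g : β → 𝕜}
    {s : Set α} {C : ℝ} (hs : MeasurableSet s) (hμs : μ s ≠ ∞)
    (hk : AEStronglyMeasurable k (μ.prod ν)) (hkC : ∀ᵐ z ∂μ.prod ν, ‖k z‖ ≤ C)
    (hks : ∀ᵐ z ∂μ.prod ν, z.1 ∉ s → k z = 0) (hg : MemLp g p ν) :
    MemLp (fun z : α × β => k z * g z.2) p (μ.prod ν) := by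
  have hind : MemLp (s.indicator fun _ => (1 : 𝕜)) p μ :=
    memLp_indicator_const p hs 1 (Or.inr hμs)
  refine (hind.mul_prod hp₀ hp hg).of_le_mul (c := C) (hk.mul hg.1.comp_snd) ?_
  filter_upwards [hkC, hks] with z hzC hzs
  by_cases hz : z.1 ∈ s
  · simpa [hz, norm_mul] using mul_le_mul_of_nonneg_right hzC (norm_nonneg (g z.2))
  · simp [hzs hz, hz]

theorem integral_integral_comp_shearAddRight {G E : Type*} [MeasurableSpace G] [AddGroup G]
    [MeasurableAdd₂ G] [MeasurableNeg G] [NormedAddCommGroup E] [NormedSpace ℝ E]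
    {μ ν : Measure G} [SFinite μ] [SFinite ν] [ν.IsAddLeftInvariant] {f : G × G → E}
    (hf : Integrable (fun z : G × G => f (z.1, z.1 + z.2)) (μ.prod ν)) :
    ∫ t, ∫ s, f (s, t) ∂μ ∂ν = ∫ t, ∫ s, f (s, s + t) ∂μ ∂ν := by
  have hshear := measurePreserving_prod_add μ ν
  have hemb := (MeasurableEquiv.shearAddRight G).measurableEmbedding
  have hf' : Integrable f (μ.prod ν) := (hshear.integrable_comp_emb hemb).1 hf
  rw [← integral_prod_symm f hf', ← integral_prod_symm _ hf, hshear.integral_comp hemb]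

end MeasureTheory

theorem adjoint_of_lifted_autoconvolution_general
    (k : ℝ × ℝ → ℂ) (hk : Measurable k)
    (C : ℝ) (hkbdd : ∀ᵐ p : ℝ × ℝ ∂volume, ‖k p‖ ≤ C)
    (hksupp : ∀ᵐ p : ℝ × ℝ ∂volume,
      ¬(0 ≤ p.1 ∧ p.1 ≤ 1 ∧ p.1 ≤ p.2 ∧ p.2 ≤ p.1 + 1) → k p = 0)
    (w : ℝ × ℝ → ℂ) (hw : MemLp w 2 volume)
    (φ : ℝ → ℂ) (hφ : MemLp φ 2 volume) :
    (∫ t, (∫ s, k (s, t) * w (s, t - s) ∂volume) * (starRingEnd ℂ) (φ t) ∂volume) =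
    ∫ t, ∫ s, w (s, t) * k (s, s + t) * (starRingEnd ℂ) (φ (s + t)) ∂volume ∂volume := by
  have hks : ∀ᵐ z : ℝ × ℝ ∂volume, z.1 ∉ Set.Icc (0 : ℝ) 1 → k z = 0 := by
    filter_upwards [hksupp] with z hz hs
    exact hz fun h => hs ⟨h.1, h.2.1⟩
  have hkφ : MemLp (fun z : ℝ × ℝ => k z * (starRingEnd ℂ) (φ z.2)) 2 volume :=
    MemLp.mul_comp_snd_of_bdd two_ne_zero ENNReal.ofNat_ne_top measurableSet_Icc
      (by simp [Real.volume_Icc]) hk.aestronglyMeasurable hkbdd hks hφ.star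
  have hint := hw.integrable_mul (hkφ.comp_measurePreserving (measurePreserving_prod_add _ _))
  calc _ = ∫ t, ∫ s, k (s, t) * w (s, t - s) * (starRingEnd ℂ) (φ t) := by
        simp_rw [integral_mul_const]
    _ = ∫ t, ∫ s, k (s, s + t) * w (s, s + t - s) * (starRingEnd ℂ) (φ (s + t)) := by
        refine integral_integral_comp_shearAddRight
          (f := fun z => k z * w (z.1, z.2 - z.1) * (starRingEnd ℂ) (φ z.2))
          (hint.congr (.of_forall fun z => ?_))
        simp only [Pi.mul_apply, Function.comp_apply, add_sub_cancel_left]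
        ring
    _ = _ := by simp only [add_sub_cancel_left, mul_comm (k _) (w _)]

/-- **The adjoint of the lifted autoconvolution integral operator.**
Let `k : ℝ × ℝ → ℂ` be measurable and essentially bounded, supported (a.e.) in
`{(s, t) : 0 ≤ s ≤ 1, s ≤ t ≤ s + 1}`, let `w ∈ L²(ℝ², ℂ)` vanish a.e. outside
`[0,1] × [0,1]` and `φ ∈ L²(ℝ, ℂ)` vanish a.e. outside `[0, 2]`.  Then
`∫ (∫ k (s, t) w (s, t − s) ds) conj (φ t) dt
   = ∫ ∫ w (s, t) k (s, s + t) conj (φ (s + t)) ds dt`,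
i.e. the adjoint of `𝒢_k` is `𝒢_k*[φ](s, t) = conj (k (s, s + t)) φ (s + t)`. -/
theorem adjoint_of_lifted_autoconvolution
    (k : ℝ × ℝ → ℂ) (hk : Measurable k)
    (C : ℝ) (hkbdd : ∀ᵐ p : ℝ × ℝ ∂volume, ‖k p‖ ≤ C)
    (hksupp : ∀ᵐ p : ℝ × ℝ ∂volume,
      ¬(0 ≤ p.1 ∧ p.1 ≤ 1 ∧ p.1 ≤ p.2 ∧ p.2 ≤ p.1 + 1) → k p = 0)
    (w : ℝ × ℝ → ℂ) (hw : MemLp w 2 volume)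
    (hwsupp : ∀ᵐ p : ℝ × ℝ ∂volume,
      ¬(p.1 ∈ Set.Icc (0 : ℝ) 1 ∧ p.2 ∈ Set.Icc (0 : ℝ) 1) → w p = 0)
    (φ : ℝ → ℂ) (hφ : MemLp φ 2 volume)
    (hφsupp : ∀ᵐ t ∂volume, t ∉ Set.Icc (0 : ℝ) 2 → φ t = 0) :
    (∫ t, (∫ s, k (s, t) * w (s, t - s) ∂volume) * (starRingEnd ℂ) (φ t) ∂volume) =
    ∫ t, ∫ s, w (s, t) * k (s, s + t) * (starRingEnd ℂ) (φ (s + t)) ∂volume ∂volume :=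
  adjoint_of_lifted_autoconvolution_general k hk C hkbdd hksupp w hw φ hφ
end

section
/- Let H be a real Hilbert space, u ∈ H, ξ ∈ H, and Φ : H → H a bounded self-adjoint linear operator. Then the inequality ‖v‖² ≥ ‖u‖² + ⟨ξ, v − u⟩ + ⟨Φ(v), v⟩ − ⟨Φ(u), u⟩ holds for all v ∈ H if and only if Φ − Id is negative semidefinite (i.e. ⟨(Φ − Id)(v), v⟩ ≤ 0 for all v ∈ H) and ξ = 2 (Id − Φ)(u). (Dilinear subdifferential of the squared Hilbert norm.) -/
/-!
Since `Φ` is self-adjoint, `q v := ‖v‖² - ⟪Φ v, v⟫ = ⟪(Id - Φ) v, v⟫` is a quadratic form with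
`q (u + h) = q u + ⟪2 (Id - Φ) u, h⟫ + q h`, and the inequality says that `ξ` is a subgradient
of `q` at `u`. Testing it along a line `h = t • w` gives `0 ≤ t² q w + t ⟪2 (Id - Φ) u - ξ, w⟫`
for all real `t`, which forces `q w ≥ 0` and `⟪2 (Id - Φ) u - ξ, w⟫ = 0`.
-/

open scoped RealInnerProductSpace

lemma nonneg_and_eq_zero_of_forall_quadratic_nonneg {a b : ℝ}
    (h : ∀ t : ℝ, 0 ≤ a * t ^ 2 + b * t) : 0 ≤ a ∧ b = 0 := by
  have hdisc : discrim a b 0 ≤ 0 := discrim_le_zero fun t => by simpa [sq] using h t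
  refine ⟨by linarith [h 1, h (-1)], ?_⟩
  rw [discrim, mul_zero, sub_zero] at hdisc
  exact pow_eq_zero_iff two_ne_zero |>.mp (le_antisymm hdisc (sq_nonneg b))

section QuadraticForm

variable {E : Type*} [NormedAddCommGroup E] [InnerProductSpace ℝ E] {A : E →ₗ[ℝ] E}

lemma LinearMap.IsSymmetric.inner_map_add_add (hA : A.IsSymmetric) (u h : E) :
    ⟪A (u + h), u + h⟫ = ⟪A u, u⟫ + 2 * ⟪A u, h⟫ + ⟪A h, h⟫ := by
  rw [map_add, inner_add_left, inner_add_right, inner_add_right, hA h u, real_inner_comm (A u) h]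
  ring

lemma LinearMap.inner_map_smul_smul (A : E →ₗ[ℝ] E) (t : ℝ) (w : E) :
    ⟪A (t • w), t • w⟫ = t ^ 2 * ⟪A w, w⟫ := by
  rw [map_smul, real_inner_smul_left, real_inner_smul_right]
  ring

lemma LinearMap.nonneg_and_eq_zero_of_forall_inner_map_add_nonneg (A : E →ₗ[ℝ] E) {c : E}
    (h : ∀ w, 0 ≤ ⟪A w, w⟫ + ⟪c, w⟫) : (∀ w, 0 ≤ ⟪A w, w⟫) ∧ c = 0 := by
  have hline (w : E) : 0 ≤ ⟪A w, w⟫ ∧ ⟪c, w⟫ = 0 := by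
    refine nonneg_and_eq_zero_of_forall_quadratic_nonneg fun t => ?_
    have hw := h (t • w)
    rw [A.inner_map_smul_smul, real_inner_smul_right] at hw
    linarith
  exact ⟨fun w => (hline w).1, inner_self_eq_zero.mp (hline c).2⟩

theorem LinearMap.IsSymmetric.forall_le_inner_map_self_iff (hA : A.IsSymmetric) (u ξ : E) :
    (∀ v, ⟪A u, u⟫ + ⟪ξ, v - u⟫ ≤ ⟪A v, v⟫) ↔ (∀ v, 0 ≤ ⟪A v, v⟫) ∧ ξ = (2 : ℝ) • A u := by
  have hshift (h : E) : ⟪A (u + h), u + h⟫ - (⟪A u, u⟫ + ⟪ξ, u + h - u⟫)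
      = ⟪A h, h⟫ + ⟪(2 : ℝ) • A u - ξ, h⟫ := by
    rw [hA.inner_map_add_add, add_sub_cancel_left, inner_sub_left, real_inner_smul_left]
    ring
  constructor
  · intro hsub
    obtain ⟨hpos, hc⟩ := A.nonneg_and_eq_zero_of_forall_inner_map_add_nonneg fun h => by
      linarith [hshift h, hsub (u + h)]
    exact ⟨hpos, (sub_eq_zero.mp hc).symm⟩
  · rintro ⟨hpos, rfl⟩ v
    have := hshift (v - u)
    rw [add_sub_cancel, sub_self, inner_zero_left] at this
    linarith [hpos (v - u)]

end QuadraticForm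

theorem dilinear_subgradient_sq_norm_iff_general
    {H : Type*} [NormedAddCommGroup H] [InnerProductSpace ℝ H]
    (u ξ : H) (Φ : H →L[ℝ] H)
    (hΦsa : ∀ x y : H, (inner ℝ (Φ x) y : ℝ) = inner ℝ x (Φ y)) :
    (∀ v : H, ‖u‖ ^ 2 + ((inner ℝ ξ (v - u) : ℝ) +
        ((inner ℝ (Φ v) v : ℝ) - (inner ℝ (Φ u) u : ℝ))) ≤ ‖v‖ ^ 2) ↔
    ((∀ v : H, (inner ℝ (Φ v - v) v : ℝ) ≤ 0) ∧ ξ = (2 : ℝ) • (u - Φ u)) := by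
  set A : H →ₗ[ℝ] H := LinearMap.id - Φ.toLinearMap
  have hA : A.IsSymmetric := fun x y => by
    simp only [A, LinearMap.sub_apply, LinearMap.id_apply, ContinuousLinearMap.coe_coe,
      inner_sub_left, inner_sub_right, hΦsa]
  have hq (v : H) : ⟪A v, v⟫ = ‖v‖ ^ 2 - ⟪Φ v, v⟫ := by
    simp [A, inner_sub_left]
  have hneg (v : H) : ⟪Φ v - v, v⟫ = -⟪A v, v⟫ := by
    rw [hq, inner_sub_left, real_inner_self_eq_norm_sq]
    ring
  have hsub := hA.forall_le_inner_map_self_iff u ξ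
  simp only [hq, hneg, neg_nonpos] at hsub ⊢
  convert hsub using 2 with v
  · constructor <;> intro h <;> linarith
  · simp [A]

/-- **Dilinear subdifferential of the squared Hilbert norm.**
Let `H` be a real Hilbert space, `u, ξ ∈ H`, and `Φ` a bounded self-adjoint operator.
Then `‖v‖² ≥ ‖u‖² + ⟨ξ, v − u⟩ + ⟨Φ v, v⟩ − ⟨Φ u, u⟩` for all `v` if and only if
`Φ − Id` is negative semidefinite and `ξ = 2 (Id − Φ) u`. -/
theorem dilinear_subgradient_sq_norm_iff
    {H : Type*} [NormedAddCommGroup H] [InnerProductSpace ℝ H] [CompleteSpace H]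
    (u ξ : H) (Φ : H →L[ℝ] H)
    (hΦsa : ∀ x y : H, (inner ℝ (Φ x) y : ℝ) = inner ℝ x (Φ y)) :
    (∀ v : H, ‖u‖ ^ 2 + ((inner ℝ ξ (v - u) : ℝ) +
        ((inner ℝ (Φ v) v : ℝ) - (inner ℝ (Φ u) u : ℝ))) ≤ ‖v‖ ^ 2) ↔
    ((∀ v : H, (inner ℝ (Φ v - v) v : ℝ) ≤ 0) ∧ ξ = (2 : ℝ) • (u - Φ u)) :=
  dilinear_subgradient_sq_norm_iff_general u ξ Φ hΦsa
end

section
/- Let H be a real Hilbert space, p ∈ (1, 2), u ∈ H with u ≠ 0, ξ ∈ H, and Φ : H → H a bounded self-adjoint linear operator. Then the inequality ‖v‖^p ≥ ‖u‖^p + ⟨ξ, v − u⟩ + ⟨Φ(v), v⟩ − ⟨Φ(u), u⟩ holds for all v ∈ H if and only if Φ is negative semidefinite (⟨Φ(v), v⟩ ≤ 0 for all v ∈ H) and ξ = p ‖u‖^{p−2} u − 2 Φ(u). (Dilinear subdifferential of the p-th power of the Hilbert norm.) -/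
/-!
The inequality says that `u` minimises `v ↦ ‖v‖ ^ p - ⟪ξ, v⟫ - ⟪Φ v, v⟫`. Along a ray `t • w`
the term `‖t • w‖ ^ p` is `o(t ^ 2)` because `p < 2`, so minimality forces `⟪Φ w, w⟫ ≤ 0`;
since `‖·‖ ^ p` is differentiable for `p > 1`, Fermat's rule at `u` determines `ξ`.
Conversely, when `Φ ≤ 0` we have `⟪Φ v, v⟫ - ⟪Φ u, u⟫ ≤ 2 ⟪Φ u, v - u⟫`, and the tangent
inequality of the convex function `‖·‖ ^ p` at `u` gives the subgradient inequality.
-/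

open Filter Topology Set
open scoped RealInnerProductSpace

section Convex

variable {E : Type*} [NormedAddCommGroup E] [NormedSpace ℝ E]

theorem ConvexOn.add_le_of_hasFDerivAt {f : E → ℝ} {f' : E →L[ℝ] ℝ} {x : E}
    (hf : ConvexOn ℝ univ f) (hf' : HasFDerivAt f f' x) (y : E) :
    f x + f' (y - x) ≤ f y := by
  have hg : ConvexOn ℝ univ (f ∘ AffineMap.lineMap (k := ℝ) x y) := hf.comp_affineMap _
  have hg' : HasDerivAt (f ∘ AffineMap.lineMap (k := ℝ) x y) (f' (y - x)) 0 := by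
    refine hf'.comp_hasDerivAt_of_eq (0 : ℝ) AffineMap.hasDerivAt_lineMap ?_
    simp
  have := hg.le_slope_of_hasDerivAt (mem_univ 0) (mem_univ 1) zero_lt_one hg'
  simp only [slope_def_field, Function.comp_apply, AffineMap.lineMap_apply_one,
    AffineMap.lineMap_apply_zero, sub_zero, div_one] at this
  linarith

theorem convexOn_norm_rpow {p : ℝ} (hp : 1 ≤ p) : ConvexOn ℝ univ fun x : E => ‖x‖ ^ p := by
  refine ⟨convex_univ, fun x _ y _ a b ha hb hab => ?_⟩
  calc ‖a • x + b • y‖ ^ p ≤ (a • ‖x‖ + b • ‖y‖) ^ p := by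
        gcongr
        exact convexOn_univ_norm.2 (mem_univ x) (mem_univ y) ha hb hab
    _ ≤ a • ‖x‖ ^ p + b • ‖y‖ ^ p :=
        (convexOn_rpow hp).2 (norm_nonneg x) (norm_nonneg y) ha hb hab

theorem tendsto_norm_smul_rpow_div_sq_atTop {p : ℝ} (hp : p < 2) (w : E) :
    Tendsto (fun t : ℝ => ‖t • w‖ ^ p / t ^ 2) atTop (𝓝 0) := by
  have hpow : Tendsto (fun t : ℝ => t ^ (p - 2) * ‖w‖ ^ p) atTop (𝓝 0) := by
    simpa using (tendsto_rpow_neg_atTop (by linarith : 0 < 2 - p)).mul_const (‖w‖ ^ p)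
  refine hpow.congr' (eventually_gt_atTop 0 |>.mono fun t ht => ?_)
  dsimp only
  rw [norm_smul, Real.norm_of_nonneg ht.le, Real.mul_rpow ht.le (norm_nonneg w),
    Real.rpow_sub ht, Real.rpow_two]
  ring

end Convex

section Quadratic

variable {H : Type*} [NormedAddCommGroup H] [InnerProductSpace ℝ H] {Φ : H →L[ℝ] H}

theorem inner_map_add_self (hΦ : (Φ : H →ₗ[ℝ] H).IsSymmetric) (u w : H) :
    ⟪Φ (u + w), u + w⟫ = ⟪Φ u, u⟫ + 2 * ⟪Φ u, w⟫ + ⟪Φ w, w⟫ := by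
  have hwu : ⟪Φ w, u⟫ = ⟪Φ u, w⟫ := by rw [real_inner_comm]; exact (hΦ u w).symm
  simp only [map_add, inner_add_left, inner_add_right, hwu]
  ring

theorem hasFDerivAt_inner_map_self (hΦ : (Φ : H →ₗ[ℝ] H).IsSymmetric) (u : H) :
    HasFDerivAt (fun v => ⟪Φ v, v⟫) (innerSL ℝ ((2 : ℝ) • Φ u)) u := by
  refine (HasFDerivAt.inner (𝕜 := ℝ) Φ.hasFDerivAt (hasFDerivAt_id u)).congr_fderiv ?_
  refine ContinuousLinearMap.ext fun w => ?_
  have hwu : ⟪Φ w, u⟫ = ⟪Φ u, w⟫ := by rw [real_inner_comm]; exact (hΦ u w).symm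
  simp only [id_eq, ContinuousLinearMap.comp_apply, ContinuousLinearMap.prod_apply,
    ContinuousLinearMap.id_apply, fderivInnerCLM_apply, hwu, map_smul,
    smul_apply, coe_innerSL_apply, smul_eq_mul]
  ring

end Quadratic

section Dilinear

variable {H : Type*} [NormedAddCommGroup H] [InnerProductSpace ℝ H]
  {F : H → ℝ} {u ξ : H} {Φ : H →L[ℝ] H}

def IsDilinearSubgradient (F : H → ℝ) (u ξ : H) (Φ : H →L[ℝ] H) : Prop :=
  ∀ v, F u + (⟪ξ, v - u⟫ + (⟪Φ v, v⟫ - ⟪Φ u, u⟫)) ≤ F v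

namespace IsDilinearSubgradient

theorem isMinOn (h : IsDilinearSubgradient F u ξ Φ) :
    IsMinOn (fun v => F v - ⟪ξ, v⟫ - ⟪Φ v, v⟫) univ u :=
  isMinOn_univ_iff.mpr fun v => by
    have := h v
    rw [inner_sub_right] at this
    linarith

theorem eq_innerSL_of_hasFDerivAt (h : IsDilinearSubgradient F u ξ Φ)
    (hΦ : (Φ : H →ₗ[ℝ] H).IsSymmetric) {F' : H →L[ℝ] ℝ} (hF : HasFDerivAt F F' u) :
    F' = innerSL ℝ (ξ + (2 : ℝ) • Φ u) := by
  have hgap := (hF.sub (innerSL ℝ ξ).hasFDerivAt).sub (hasFDerivAt_inner_map_self hΦ u)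
  have := h.isMinOn.isLocalMin univ_mem |>.hasFDerivAt_eq_zero hgap
  rwa [map_add, ← sub_eq_zero, ← sub_sub]

theorem inner_map_self_nonpos (h : IsDilinearSubgradient F u ξ Φ) {w : H}
    (hF : Tendsto (fun t : ℝ => F (t • w) / t ^ 2) atTop (𝓝 0)) : ⟪Φ w, w⟫ ≤ 0 := by
  set c := F u - ⟪ξ, u⟫ - ⟪Φ u, u⟫
  have hbound : ∀ t : ℝ, 1 ≤ t → ⟪Φ w, w⟫ ≤ F (t • w) / t ^ 2 - c / t ^ 2 - ⟪ξ, w⟫ / t := by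
    intro t ht
    have hv := h (t • w)
    simp only [map_smul, real_inner_smul_left, real_inner_smul_right, inner_sub_right] at hv
    have ht0 : 0 < t := by linarith
    rw [show F (t • w) / t ^ 2 - c / t ^ 2 - ⟪ξ, w⟫ / t = (F (t • w) - c - t * ⟪ξ, w⟫) / t ^ 2 by
      field_simp, le_div_iff₀ (by positivity)]
    linarith
  have hlim : Tendsto (fun t : ℝ => F (t • w) / t ^ 2 - c / t ^ 2 - ⟪ξ, w⟫ / t) atTop (𝓝 0) := by
    simpa using (hF.sub (tendsto_const_nhds.div_atTop (tendsto_pow_atTop two_ne_zero))).sub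
      (tendsto_const_nhds.div_atTop tendsto_id)
  exact ge_of_tendsto hlim (eventually_atTop.mpr ⟨1, hbound⟩)

end IsDilinearSubgradient

theorem isDilinearSubgradient_of_convexOn (hF : ConvexOn ℝ univ F) {g : H}
    (hF' : HasFDerivAt F (innerSL ℝ g) u) (hΦ : (Φ : H →ₗ[ℝ] H).IsSymmetric)
    (hneg : ∀ v, ⟪Φ v, v⟫ ≤ 0) : IsDilinearSubgradient F u (g - (2 : ℝ) • Φ u) Φ := fun v => by
  have htan := hF.add_le_of_hasFDerivAt hF' v
  have hquad := inner_map_add_self hΦ u (v - u)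
  rw [add_sub_cancel] at hquad
  have := hneg (v - u)
  rw [coe_innerSL_apply] at htan
  rw [inner_sub_left, real_inner_smul_left]
  linarith

theorem isDilinearSubgradient_iff_of_convexOn (hF : ConvexOn ℝ univ F) {g : H}
    (hF' : HasFDerivAt F (innerSL ℝ g) u)
    (hgrowth : ∀ w, Tendsto (fun t : ℝ => F (t • w) / t ^ 2) atTop (𝓝 0))
    (hΦ : (Φ : H →ₗ[ℝ] H).IsSymmetric) :
    IsDilinearSubgradient F u ξ Φ ↔ (∀ v, ⟪Φ v, v⟫ ≤ 0) ∧ ξ = g - (2 : ℝ) • Φ u := by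
  refine ⟨fun h => ⟨fun w => h.inner_map_self_nonpos (hgrowth w), ?_⟩, ?_⟩
  · have hξ := h.eq_innerSL_of_hasFDerivAt hΦ hF'
    rw [eq_sub_iff_add_eq]
    exact ext_inner_right ℝ fun w => by
      simpa [inner_add_left, real_inner_smul_left] using (DFunLike.congr_fun hξ w).symm
  · rintro ⟨hneg, rfl⟩
    exact isDilinearSubgradient_of_convexOn hF hF' hΦ hneg

end Dilinear

theorem dilinear_subgradient_pow_norm_iff_general
    {H : Type*} [NormedAddCommGroup H] [InnerProductSpace ℝ H]
    (p : ℝ) (hp1 : 1 < p) (hp2 : p < 2)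
    (u : H) (ξ : H) (Φ : H →L[ℝ] H)
    (hΦsa : ∀ x y : H, (inner ℝ (Φ x) y : ℝ) = inner ℝ x (Φ y)) :
    (∀ v : H, ‖u‖ ^ p + ((inner ℝ ξ (v - u) : ℝ) +
        ((inner ℝ (Φ v) v : ℝ) - (inner ℝ (Φ u) u : ℝ))) ≤ ‖v‖ ^ p) ↔
    ((∀ v : H, (inner ℝ (Φ v) v : ℝ) ≤ 0) ∧
      ξ = (p * ‖u‖ ^ (p - 2)) • u - (2 : ℝ) • Φ u) := by
  have hF' : HasFDerivAt (fun v : H => ‖v‖ ^ p) (innerSL ℝ ((p * ‖u‖ ^ (p - 2)) • u)) u := by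
    simpa using hasFDerivAt_norm_rpow u hp1
  exact isDilinearSubgradient_iff_of_convexOn (convexOn_norm_rpow hp1.le) hF'
    (tendsto_norm_smul_rpow_div_sq_atTop hp2) hΦsa

/-- **Dilinear subdifferential of the `p`-th power of the Hilbert norm, `1 < p < 2`.**
Let `H` be a real Hilbert space, `p ∈ (1, 2)`, `u ≠ 0`, `ξ ∈ H`, and `Φ` a bounded
self-adjoint operator.  Then `‖v‖^p ≥ ‖u‖^p + ⟨ξ, v − u⟩ + ⟨Φ v, v⟩ − ⟨Φ u, u⟩` for
all `v` if and only if `Φ` is negative semidefinite and `ξ = p ‖u‖^{p−2} u − 2 Φ u`. -/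
theorem dilinear_subgradient_pow_norm_iff
    {H : Type*} [NormedAddCommGroup H] [InnerProductSpace ℝ H] [CompleteSpace H]
    (p : ℝ) (hp1 : 1 < p) (hp2 : p < 2)
    (u : H) (hu : u ≠ 0) (ξ : H) (Φ : H →L[ℝ] H)
    (hΦsa : ∀ x y : H, (inner ℝ (Φ x) y : ℝ) = inner ℝ x (Φ y)) :
    (∀ v : H, ‖u‖ ^ p + ((inner ℝ ξ (v - u) : ℝ) +
        ((inner ℝ (Φ v) v : ℝ) - (inner ℝ (Φ u) u : ℝ))) ≤ ‖v‖ ^ p) ↔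
    ((∀ v : H, (inner ℝ (Φ v) v : ℝ) ≤ 0) ∧
      ξ = (p * ‖u‖ ^ (p - 2)) • u - (2 : ℝ) • Φ u) :=
  dilinear_subgradient_pow_norm_iff_general p hp1 hp2 u ξ Φ hΦsa
end
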